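/- arXiv:2205.00064 — 9 statements merged into one kernel-verified Lean document; each statement's English description precedes it below -/
import Mathlib

section
/- Let f : ℝ^d → ℝ be locally Lipschitz and assume hypotheses (H1)–(H6) of the setting, with C_M > 0. Define D₁ := μ/(8(μ+L)), D₂ := μ/2, C₁ := γ/4, C₂ := min{γ/(8C_a), min{1, 1/δ_A}/2}, δ_GI := min{δ_A/4, D₁/C_M}. Then for every a₁ ∈ (0, D₁], every a₂ ∈ (0, C₂], every x ∈ ball(x̄, δ_GI), and every σ > 0 such that either (Region I) (a₁/2)·dist(x, M) ≤ σ ≤ a₁·dist(x, M) and a₂²·‖P x − x̄‖² ≤ dist(x, M), or (Region II) (a₂/2)·‖P x − x̄‖ ≤ σ ≤ a₂·‖P x − x̄‖ and dist(x, M)/σ ≤ 2a₂·‖P x − x̄‖, every g ∈ ∂_σ f(x) satisfies σ·‖g‖ ≥ min{γa₂/(8·max{4La₂², β}), μa₁/(4·max{2L, β/a₂²})}·(f(x) − f(x̄)). -/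
open Metric Set Filter
open scoped InnerProductSpace

abbrev Euc (d : ℕ) := EuclideanSpace ℝ (Fin d)

noncomputable def clarkeSubdiff {d : ℕ} (f : Euc d → ℝ) (x : Euc d) : Set (Euc d) :=
  convexHull ℝ {v | ∃ u : ℕ → Euc d,
    (∀ n, DifferentiableAt ℝ f (u n)) ∧
    Tendsto u atTop (nhds x) ∧
    Tendsto (fun n => gradient f (u n)) atTop (nhds v)}

noncomputable def goldsteinSubdiff {d : ℕ} (f : Euc d → ℝ) (σ : ℝ) (x : Euc d) : Set (Euc d) :=
  convexHull ℝ (⋃ y ∈ closedBall x σ, clarkeSubdiff f y)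

/-
Region I (σ comparable to dist(x, M), which dominates ‖P x − x̄‖²): moving by at most
σ ≤ D₁·dist(x, M) changes the aiming inner product ⟨v, · − P ·⟩ by O(σ + C_M dist(x, M)²), so
every Clarke subgradient on the σ-ball, hence every Goldstein subgradient g, satisfies
⟨g, x − P x⟩ ≥ (μ/2)·dist(x, M), i.e. ‖g‖ ≥ μ/2, while f(x) − f(x̄) = O(dist(x, M)).
Region II (σ comparable to ‖P x − x̄‖, which dominates dist(x, M)/σ): the tangential part of g
is within C_a(dist(x, M) + σ) ≤ (γ/4)‖P x − x̄‖ of G_x, and ‖G_x‖ ≥ (γ/2)‖P x − x̄‖, so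
‖g‖ ≥ (γ/4)‖P x − x̄‖, while f(x) − f(x̄) = O(‖P x − x̄‖²).
-/

theorem div_mul_le_of_le_mul_of_mul_le {c k m t u s : ℝ} (hk : 0 < k) (hm : 0 < m) (hc : 0 ≤ c)
    (ht : t ≤ m * u) (hs : c * u ≤ k * s) : c / (k * m) * t ≤ s :=
  calc c / (k * m) * t ≤ c / (k * m) * (m * u) := by gcongr
    _ = c * u / k := by field_simp
    _ ≤ s := by rwa [div_le_iff₀ hk, mul_comm s]

theorem mul_le_quarter_of_le_min {a δ R : ℝ} (hδ : 0 < δ) (hR : 0 ≤ R)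
    (haδ : a ≤ min 1 (1 / δ) / 2) (hRδ : R ≤ δ / 2) : a * R ≤ 1 / 4 := by
  have ha' : a ≤ 1 / δ / 2 := haδ.trans (by gcongr; exact min_le_right _ _)
  calc a * R ≤ 1 / δ / 2 * (δ / 2) := by gcongr
    _ = 1 / 4 := by field_simp; norm_num

theorem norm_sub_le_two_mul_dist_of_nearest {E : Type*} [NormedAddCommGroup E] {M : Set E}
    {x p xbar : E} (hp : ‖x - p‖ = infDist x M) (hxbar : xbar ∈ M) :
    ‖p - xbar‖ ≤ 2 * dist x xbar := by
  have hpx : ‖p - x‖ ≤ dist x xbar := by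
    rw [norm_sub_rev, hp]; exact infDist_le_dist_of_mem hxbar
  linarith [norm_sub_le_norm_sub_add_norm_sub p x xbar, dist_eq_norm x xbar]

section InnerProductSpace

variable {E : Type*} [NormedAddCommGroup E] [InnerProductSpace ℝ E]

theorem le_inner_of_mem_convexHull {s : Set E} {w : E} {c : ℝ}
    (h : ∀ v ∈ s, c ≤ ⟪v, w⟫_ℝ) {g : E} (hg : g ∈ convexHull ℝ s) : c ≤ ⟪g, w⟫_ℝ :=
  convexHull_min h
    (convex_halfSpace_ge ⟨fun a b => inner_add_left a b w, fun r a => real_inner_smul_left a w r⟩ c)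
    hg

theorem inner_sub_sub_le_inner_sub (v x y p q : E) :
    ⟪v, y - q⟫_ℝ - ‖v‖ * (‖x - y‖ + ‖q - p‖) ≤ ⟪v, x - p⟫_ℝ := by
  have hsplit : ⟪v, x - p⟫_ℝ = ⟪v, y - q⟫_ℝ + ⟪v, x - y⟫_ℝ + ⟪v, q - p⟫_ℝ := by
    rw [← inner_add_right, ← inner_add_right]
    congr 1
    abel
  have h₁ := neg_le_of_abs_le (abs_real_inner_le_norm v (x - y))
  have h₂ := neg_le_of_abs_le (abs_real_inner_le_norm v (q - p))
  linarith

variable (K : Submodule ℝ E) [K.HasOrthogonalProjection]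

theorem norm_sub_le_of_norm_sub_starProjection_le {a b c : E} {ε : ℝ}
    (h : ‖a - b - K.starProjection c‖ ≤ ε) : ‖a - b‖ ≤ ‖c‖ + ε :=
  calc ‖a - b‖ ≤ ‖K.starProjection c‖ + ‖a - b - K.starProjection c‖ := norm_le_insert' _ _
    _ ≤ ‖c‖ + ε := add_le_add (K.norm_starProjection_apply_le c) h

theorem norm_sub_norm_starProjection_sub_le {G : E} (hG : G ∈ K) (g : E) :
    ‖G‖ - ‖K.starProjection (g - G)‖ ≤ ‖g‖ := by
  rw [map_sub, K.starProjection_eq_self_iff.mpr hG]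
  calc ‖G‖ - ‖K.starProjection g - G‖ ≤ ‖K.starProjection g‖ := by
        linarith [norm_le_insert (K.starProjection g) G]
    _ ≤ ‖g‖ := K.norm_starProjection_apply_le g

theorem goldstein_lower_bound_regionII
    {G g : E} {D R σ t L γ β Ca a₂ : ℝ} (hL : 0 < L) (hγ : 0 < γ) (hCa : 0 < Ca)
    (ha₂ : 0 < a₂) (hσ : 0 < σ)
    (hG : G ∈ K) (hGR : γ / 2 * R ≤ ‖G‖) (hproj : ‖K.starProjection (g - G)‖ ≤ Ca * (D + σ))
    (ht : t ≤ L * D + β / 2 * R ^ 2)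
    (ha₂Ca : a₂ ≤ γ / (8 * Ca)) (ha₂R : a₂ * R ≤ 1 / 4)
    (hσl : a₂ / 2 * R ≤ σ) (hσu : σ ≤ a₂ * R) (hDσ : D / σ ≤ 2 * a₂ * R) :
    γ * a₂ / (8 * max (4 * L * a₂ ^ 2) β) * t ≤ σ * ‖g‖ := by
  have hR : 0 < R := pos_of_mul_pos_right (hσ.trans_le hσu) ha₂.le
  have hCaa₂ : Ca * a₂ ≤ γ / 8 := by
    rw [le_div_iff₀ (by positivity)] at ha₂Ca; linarith
  have hD : D ≤ 2 * a₂ ^ 2 * R ^ 2 := by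
    rw [div_le_iff₀ hσ] at hDσ
    nlinarith [mul_le_mul_of_nonneg_left hσu (by positivity : (0 : ℝ) ≤ 2 * a₂ * R)]
  have hCaσ : Ca * σ ≤ γ / 8 * R := by nlinarith [mul_le_mul_of_nonneg_left hσu hCa.le]
  have hCaD : Ca * D ≤ γ / 8 * R := by
    nlinarith [mul_le_mul hCaa₂ ha₂R (by positivity) (by positivity),
      mul_le_mul_of_nonneg_left hD hCa.le]
  have hgR : γ / 4 * R ≤ ‖g‖ := by
    linarith [norm_sub_norm_starProjection_sub_le K hG g]
  refine div_mul_le_of_le_mul_of_mul_le (by norm_num) (by positivity) (by positivity) (u := R ^ 2) ?_ ?_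
  · nlinarith [le_max_left (4 * L * a₂ ^ 2) β, le_max_right (4 * L * a₂ ^ 2) β]
  · nlinarith [mul_le_mul hσl hgR (by positivity) hσ.le]

end InnerProductSpace

section Goldstein

variable {d : ℕ}

theorem le_inner_of_mem_goldsteinSubdiff {f : Euc d → ℝ} {σ c : ℝ} {x w : Euc d}
    (h : ∀ y ∈ closedBall x σ, ∀ v ∈ clarkeSubdiff f y, c ≤ ⟪v, w⟫_ℝ) {g : Euc d}
    (hg : g ∈ goldsteinSubdiff f σ x) : c ≤ ⟪g, w⟫_ℝ :=
  le_inner_of_mem_convexHull (fun v hv => by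
    obtain ⟨y, hy, hv⟩ := mem_iUnion₂.mp hv
    exact h y hy v hv) hg

theorem half_mul_infDist_le_inner_of_mem_goldsteinSubdiff
    {f : Euc d → ℝ} {M : Set (Euc d)} {P : Euc d → Euc d} (K : Submodule ℝ (Euc d))
    {x g : Euc d} {σ L μ CM : ℝ} (hL : 0 < L) (hμ : 0 < μ) (hCM : 0 ≤ CM)
    (hbound : ∀ y ∈ closedBall x σ, ∀ v ∈ clarkeSubdiff f y, ‖v‖ ≤ L)
    (haim : ∀ y ∈ closedBall x σ, ∀ v ∈ clarkeSubdiff f y,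
      μ * infDist y M ≤ ⟪v, y - P y⟫_ℝ)
    (hP : ∀ y ∈ closedBall x σ,
      ‖P y - P x - K.starProjection (y - x)‖ ≤ CM * (infDist x M ^ 2 + ‖x - y‖ ^ 2))
    (hCMD : CM * infDist x M ≤ μ / (8 * (μ + L)))
    (hσ : σ ≤ μ / (8 * (μ + L)) * infDist x M)
    (hg : g ∈ goldsteinSubdiff f σ x) : μ / 2 * infDist x M ≤ ⟪g, x - P x⟫_ℝ := by
  set D := infDist x M
  set D₁ := μ / (8 * (μ + L)) with hD₁
  have hD₁μ : 8 * (μ + L) * D₁ = μ := by rw [hD₁]; field_simp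
  have hD₁1 : D₁ ≤ 1 := (div_le_one (by positivity)).mpr (by linarith)
  have hD0 : 0 ≤ D := infDist_nonneg
  have hD₁D : 0 ≤ D₁ * D := mul_nonneg (by positivity) hD0
  have hσD : σ ≤ D := hσ.trans (mul_le_of_le_one_left hD0 hD₁1)
  refine le_inner_of_mem_goldsteinSubdiff (fun y hy v hv => ?_) hg
  have hxy : ‖x - y‖ ≤ σ := by rw [← dist_eq_norm, dist_comm]; exact mem_closedBall.mp hy
  have hyM : D - σ ≤ infDist y M := by
    linarith [infDist_le_infDist_add_dist (x := x) (y := y) (s := M), dist_eq_norm x y]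
  have hPyx : ‖P y - P x‖ ≤ σ + 2 * (D₁ * D) := by
    have hCMσ : CM * σ ^ 2 ≤ CM * D ^ 2 := by gcongr; exact (norm_nonneg _).trans hxy
    calc ‖P y - P x‖ ≤ ‖y - x‖ + CM * (D ^ 2 + ‖x - y‖ ^ 2) :=
          norm_sub_le_of_norm_sub_starProjection_le K (hP y hy)
      _ ≤ σ + (CM * D ^ 2 + CM * σ ^ 2) := by
          rw [norm_sub_rev, mul_add]; gcongr
      _ ≤ σ + 2 * (D₁ * D) := by nlinarith
  have hvL : ‖v‖ * (‖x - y‖ + ‖P y - P x‖) ≤ L * (σ + (σ + 2 * (D₁ * D))) :=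
    mul_le_mul (hbound y hy v hv) (add_le_add hxy hPyx) (by positivity) hL.le
  have hσD₁ : (μ + 2 * L) * σ ≤ (μ + 2 * L) * (D₁ * D) := by gcongr
  calc μ / 2 * D ≤ μ * (D - σ) - L * (σ + (σ + 2 * (D₁ * D))) := by
        nlinarith [congrArg (· * D) hD₁μ]
    _ ≤ ⟪v, y - P y⟫_ℝ - ‖v‖ * (‖x - y‖ + ‖P y - P x‖) := by
        nlinarith [haim y hy v hv]
    _ ≤ ⟪v, x - P x⟫_ℝ := inner_sub_sub_le_inner_sub v x y (P x) (P y)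

theorem goldstein_lower_bound_regionI
    {f : Euc d → ℝ} {M : Set (Euc d)} {P : Euc d → Euc d} (K : Submodule ℝ (Euc d))
    {xbar x g : Euc d} {σ L μ β CM a₁ a₂ : ℝ} (hL : 0 < L) (hμ : 0 < μ) (hβ : 0 < β)
    (hCM : 0 ≤ CM) (ha₁ : 0 < a₁) (ha₂ : 0 < a₂) (hσ : 0 < σ)
    (hPx : ‖x - P x‖ = infDist x M)
    (hbound : ∀ y ∈ closedBall x σ, ∀ v ∈ clarkeSubdiff f y, ‖v‖ ≤ L)
    (haim : ∀ y ∈ closedBall x σ, ∀ v ∈ clarkeSubdiff f y,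
      μ * infDist y M ≤ ⟪v, y - P y⟫_ℝ)
    (hP : ∀ y ∈ closedBall x σ,
      ‖P y - P x - K.starProjection (y - x)‖ ≤ CM * (infDist x M ^ 2 + ‖x - y‖ ^ 2))
    (hgap : f x - f xbar ≤ L * infDist x M + β / 2 * ‖P x - xbar‖ ^ 2)
    (hCMD : CM * infDist x M ≤ μ / (8 * (μ + L))) (ha₁D : a₁ ≤ μ / (8 * (μ + L)))
    (hσl : a₁ / 2 * infDist x M ≤ σ) (hσu : σ ≤ a₁ * infDist x M)
    (hRD : a₂ ^ 2 * ‖P x - xbar‖ ^ 2 ≤ infDist x M)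
    (hg : g ∈ goldsteinSubdiff f σ x) :
    μ * a₁ / (4 * max (2 * L) (β / a₂ ^ 2)) * (f x - f xbar) ≤ σ * ‖g‖ := by
  set D := infDist x M
  set m := max (2 * L) (β / a₂ ^ 2)
  have hDpos : 0 < D := pos_of_mul_pos_right (hσ.trans_le hσu) ha₁.le
  have hinner := half_mul_infDist_le_inner_of_mem_goldsteinSubdiff K hL hμ hCM hbound haim hP
    hCMD (hσu.trans (by gcongr)) hg
  have hgμ : μ / 2 ≤ ‖g‖ := by
    refine le_of_mul_le_mul_right ?_ hDpos
    calc μ / 2 * D ≤ ⟪g, x - P x⟫_ℝ := hinner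
      _ ≤ ‖g‖ * D := hPx ▸ real_inner_le_norm _ _
  have hβR : β / 2 * ‖P x - xbar‖ ^ 2 ≤ m / 2 * D :=
    calc β / 2 * ‖P x - xbar‖ ^ 2 = β / a₂ ^ 2 / 2 * (a₂ ^ 2 * ‖P x - xbar‖ ^ 2) := by
          field_simp
      _ ≤ m / 2 * D := by gcongr; exact le_max_right _ _
  refine div_mul_le_of_le_mul_of_mul_le (by norm_num) (by positivity) (by positivity) (u := D) ?_ ?_
  · nlinarith [le_max_left (2 * L) (β / a₂ ^ 2)]
  · nlinarith [mul_le_mul hσl hgμ (by positivity) hσ.le]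

end Goldstein

theorem stmt0_general {d : ℕ}
    (f : Euc d → ℝ)
    (xbar : Euc d) (M : Set (Euc d)) (hxbarM : xbar ∈ M)
    (δA L μ γ β Ca CM : ℝ)
    (hδA : 0 < δA) (hL : 0 < L) (hμ : 0 < μ) (hγ : 0 < γ) (hβ : 0 < β)
    (hCa : 0 < Ca) (hCM : 0 < CM)
    (P : Euc d → Euc d)
    (hP : ∀ z ∈ ball xbar (2*δA), P z ∈ M ∧ ‖z - P z‖ = Metric.infDist z M)
    (Tsp : Euc d → Submodule ℝ (Euc d)) (Q : Euc d → Euc d → Euc d)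
    (hQ : ∀ x ∈ ball xbar δA, ∀ v, Q x v = (Submodule.orthogonalProjectionOnto (Tsp x) v : Euc d))
    (G : Euc d → Euc d)
    (hG : ∀ x ∈ ball xbar δA, G x ∈ Tsp x)
    (H1 : ∀ x' ∈ ball xbar (2*δA), ∀ v ∈ clarkeSubdiff f x', ‖v‖ ≤ L)
    (H2 : ∀ x' ∈ ball xbar δA, ∀ v ∈ clarkeSubdiff f x',
      μ * Metric.infDist x' M ≤ ⟪ v, x' - P x' ⟫_ℝ)
    (H3 : ∀ x ∈ ball xbar δA, ∀ x' ∈ ball xbar (2*δA),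
      ‖P x' - P x - Q x (x' - x)‖ ≤ CM * (Metric.infDist x M ^ 2 + ‖x - x'‖ ^ 2))
    (H4 : ∀ x ∈ ball xbar δA, ∀ σ ∈ Icc (0:ℝ) δA, ∀ g ∈ goldsteinSubdiff f σ x,
      ‖Q x (g - G x)‖ ≤ Ca * (Metric.infDist x M + σ))
    (H5 : ∀ x ∈ ball xbar δA, γ/2 * ‖P x - xbar‖ ≤ ‖G x‖ ∧ ‖G x‖ ≤ β * ‖P x - xbar‖)
    (H6 : ∀ x ∈ ball xbar δA, f x - f xbar ≤ L * Metric.infDist x M + β/2 * ‖P x - xbar‖ ^ 2)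
    (D₁ C₂ δGI : ℝ)
    (hD₁ : D₁ = μ / (8*(μ+L)))
    (hC₂ : C₂ = min (γ/(8*Ca)) (min 1 (1/δA) / 2))
    (hδGI : δGI = min (δA/4) (D₁/CM))
    (a₁ a₂ : ℝ) (ha₁ : 0 < a₁ ∧ a₁ ≤ D₁) (ha₂ : 0 < a₂ ∧ a₂ ≤ C₂)
    (x : Euc d) (hx : x ∈ ball xbar δGI) (σ : ℝ) (hσ : 0 < σ)
    (hreg : (a₁/2 * Metric.infDist x M ≤ σ ∧ σ ≤ a₁ * Metric.infDist x M ∧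
             a₂^2 * ‖P x - xbar‖^2 ≤ Metric.infDist x M) ∨
            (a₂/2 * ‖P x - xbar‖ ≤ σ ∧ σ ≤ a₂ * ‖P x - xbar‖ ∧
             Metric.infDist x M / σ ≤ 2*a₂*‖P x - xbar‖))
    (g : Euc d) (hg : g ∈ goldsteinSubdiff f σ x) :
    min (γ*a₂/(8*max (4*L*a₂^2) β)) (μ*a₁/(4*max (2*L) (β/a₂^2))) * (f x - f xbar)
      ≤ σ * ‖g‖ := by
  obtain ⟨ha₁0, ha₁D⟩ := ha₁
  obtain ⟨ha₂0, ha₂C⟩ := ha₂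
  subst hD₁ hC₂ hδGI
  have hxA : dist x xbar < δA / 4 := (mem_ball.mp hx).trans_le (min_le_left _ _)
  have hxδA : x ∈ ball xbar δA := mem_ball.mpr (by linarith)
  have hball₂ : ball xbar δA ⊆ ball xbar (2 * δA) := ball_subset_ball (by linarith)
  have hPx := (hP x (hball₂ hxδA)).2
  have hQx : ∀ v, Q x v = (Tsp x).starProjection v := hQ x hxδA
  rcases le_or_gt (f x - f xbar) 0 with hgap | hgap
  · exact (mul_nonpos_of_nonneg_of_nonpos (by positivity) hgap).trans (by positivity)
  rcases hreg with ⟨hσl, hσu, hRD⟩ | ⟨hσl, hσu, hDσ⟩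
  · have hDx : infDist x M < μ / (8 * (μ + L)) / CM :=
      (infDist_le_dist_of_mem hxbarM).trans_lt ((mem_ball.mp hx).trans_le (min_le_right _ _))
    have hσD : σ ≤ infDist x M := hσu.trans (mul_le_of_le_one_left infDist_nonneg
      (ha₁D.trans ((div_le_one (by positivity)).mpr (by linarith))))
    have hσball : closedBall x σ ⊆ ball xbar δA := closedBall_subset_ball' (by
      linarith [infDist_le_dist_of_mem (x := x) hxbarM])
    refine (mul_le_mul_of_nonneg_right (min_le_right _ _) hgap.le).trans
      (goldstein_lower_bound_regionI (Tsp x) hL hμ hβ hCM.le ha₁0 ha₂0 hσ hPx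
        (fun y hy => H1 y (hball₂ (hσball hy))) (fun y hy => H2 y (hσball hy))
        (fun y hy => hQx (y - x) ▸ H3 x hxδA y (hball₂ (hσball hy))) (H6 x hxδA)
        ((lt_div_iff₀' hCM).mp hDx).le ha₁D hσl hσu hRD hg)
  · have hR : ‖P x - xbar‖ ≤ δA / 2 := by
      linarith [norm_sub_le_two_mul_dist_of_nearest hPx hxbarM]
    have ha₂R := mul_le_quarter_of_le_min hδA (norm_nonneg _) (ha₂C.trans (min_le_right _ _)) hR
    have ha₂half : a₂ ≤ 1 / 2 :=
      ha₂C.trans ((min_le_right _ _).trans (by linarith [min_le_left 1 (1 / δA)]))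
    have hσA : σ ≤ δA := by nlinarith [norm_nonneg (P x - xbar)]
    refine (mul_le_mul_of_nonneg_right (min_le_left _ _) hgap.le).trans
      (goldstein_lower_bound_regionII (Tsp x) hL hγ hCa ha₂0 hσ (hG x hxδA) (H5 x hxδA).1
        (hQx (g - G x) ▸ H4 x hxδA σ ⟨hσ.le, hσA⟩ g hg) (H6 x hxδA)
        (ha₂C.trans (min_le_left _ _)) ha₂R hσl hσu hDσ)

theorem stmt0 {d : ℕ}
    (f : Euc d → ℝ) (hf : LocallyLipschitz f)
    (xbar : Euc d) (M : Set (Euc d)) (hxbarM : xbar ∈ M)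
    (δA L μ γ β Ca CM : ℝ)
    (hδA : 0 < δA) (hL : 0 < L) (hμ : 0 < μ) (hγ : 0 < γ) (hβ : 0 < β)
    (hCa : 0 < Ca) (hCM : 0 < CM)
    (P : Euc d → Euc d)
    (hP : ∀ z ∈ ball xbar (2*δA), P z ∈ M ∧ ‖z - P z‖ = Metric.infDist z M)
    (Tsp : Euc d → Submodule ℝ (Euc d)) (Q : Euc d → Euc d → Euc d)
    (hQ : ∀ x ∈ ball xbar δA, ∀ v, Q x v = (Submodule.orthogonalProjectionOnto (Tsp x) v : Euc d))
    (G : Euc d → Euc d)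
    (hG : ∀ x ∈ ball xbar δA, G x ∈ Tsp x)
    (H1 : ∀ x' ∈ ball xbar (2*δA), ∀ v ∈ clarkeSubdiff f x', ‖v‖ ≤ L)
    (H2 : ∀ x' ∈ ball xbar δA, ∀ v ∈ clarkeSubdiff f x',
      μ * Metric.infDist x' M ≤ ⟪ v, x' - P x' ⟫_ℝ)
    (H3 : ∀ x ∈ ball xbar δA, ∀ x' ∈ ball xbar (2*δA),
      ‖P x' - P x - Q x (x' - x)‖ ≤ CM * (Metric.infDist x M ^ 2 + ‖x - x'‖ ^ 2))
    (H4 : ∀ x ∈ ball xbar δA, ∀ σ ∈ Icc (0:ℝ) δA, ∀ g ∈ goldsteinSubdiff f σ x,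
      ‖Q x (g - G x)‖ ≤ Ca * (Metric.infDist x M + σ))
    (H5 : ∀ x ∈ ball xbar δA, γ/2 * ‖P x - xbar‖ ≤ ‖G x‖ ∧ ‖G x‖ ≤ β * ‖P x - xbar‖)
    (H6 : ∀ x ∈ ball xbar δA, f x - f xbar ≤ L * Metric.infDist x M + β/2 * ‖P x - xbar‖ ^ 2)
    (D₁ D₂ C₁ C₂ δGI : ℝ)
    (hD₁ : D₁ = μ / (8*(μ+L)))
    (hD₂ : D₂ = μ/2)
    (hC₁ : C₁ = γ/4)
    (hC₂ : C₂ = min (γ/(8*Ca)) (min 1 (1/δA) / 2))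
    (hδGI : δGI = min (δA/4) (D₁/CM))
    (a₁ a₂ : ℝ) (ha₁ : 0 < a₁ ∧ a₁ ≤ D₁) (ha₂ : 0 < a₂ ∧ a₂ ≤ C₂)
    (x : Euc d) (hx : x ∈ ball xbar δGI) (σ : ℝ) (hσ : 0 < σ)
    (hreg : (a₁/2 * Metric.infDist x M ≤ σ ∧ σ ≤ a₁ * Metric.infDist x M ∧
             a₂^2 * ‖P x - xbar‖^2 ≤ Metric.infDist x M) ∨
            (a₂/2 * ‖P x - xbar‖ ≤ σ ∧ σ ≤ a₂ * ‖P x - xbar‖ ∧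
             Metric.infDist x M / σ ≤ 2*a₂*‖P x - xbar‖))
    (g : Euc d) (hg : g ∈ goldsteinSubdiff f σ x) :
    min (γ*a₂/(8*max (4*L*a₂^2) β)) (μ*a₁/(4*max (2*L) (β/a₂^2))) * (f x - f xbar)
      ≤ σ * ‖g‖ :=
  stmt0_general f xbar M hxbarM δA L μ γ β Ca CM hδA hL hμ hγ hβ hCa hCM P hP Tsp Q hQ G hG H1 H2 H3
    H4 H5 H6 D₁ C₂ δGI hD₁ hC₂ hδGI a₁ a₂ ha₁ ha₂ x hx σ hσ hreg g hg
end

section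
/- Let f : ℝ^d → ℝ be locally Lipschitz and assume hypotheses (H4) and (H5) of the setting. Define C₁ := γ/4 and C₂ := min{γ/(8C_a), min{1, 1/δ_A}/2}. Then for every x ∈ ball(x̄, δ_A) and every σ ≥ 0 with max{dist(x, M), σ} ≤ C₂·‖P x − x̄‖, every g ∈ ∂_σ f(x) satisfies ‖Q_x g‖ ≥ C₁·‖P x − x̄‖. -/
open Metric Set Filter
open scoped InnerProductSpace

/-!
Since `G x` lies in the tangent space, `Q x g = G x + Q x (g - G x)`, so `‖Q x g‖` is at least
`‖G x‖ - ‖Q x (g - G x)‖ ≥ γ/2 ‖P x - x̄‖ - C_a (dist(x, M) + σ)`, and the choice of `C₂` makes the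
error term at most `γ/4 ‖P x - x̄‖`. The second part of `C₂` only serves to keep `σ ≤ δ_A`, so that
(H4) applies: `‖P x - x̄‖ ≤ dist(x, M) + ‖x - x̄‖ ≤ 2 ‖x - x̄‖ < 2 δ_A`.
-/

theorem Submodule.norm_sub_norm_starProjection_sub_le {𝕜 E : Type*} [RCLike 𝕜]
    [NormedAddCommGroup E] [InnerProductSpace 𝕜 E] {K : Submodule 𝕜 E}
    [K.HasOrthogonalProjection] {v : E} (hv : v ∈ K) (g : E) :
    ‖v‖ - ‖K.starProjection (g - v)‖ ≤ ‖K.starProjection g‖ := by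
  rw [map_sub, starProjection_eq_self_iff.mpr hv, norm_sub_rev]
  linarith [norm_sub_norm_le v (K.starProjection g)]

theorem Metric.dist_le_two_mul_dist_of_dist_eq_infDist {α : Type*} [PseudoMetricSpace α]
    {s : Set α} {x y p : α} (hy : y ∈ s) (hp : dist x p = infDist x s) :
    dist p y ≤ 2 * dist x y := by
  linarith [dist_triangle_left p y x, hp ▸ infDist_le_dist_of_mem (x := x) hy]

theorem mul_add_le_of_le_div {Ca γ c r a b : ℝ} (hCa : 0 < Ca) (hr : 0 ≤ r)
    (hc : c ≤ γ / (8 * Ca)) (ha : a ≤ c * r) (hb : b ≤ c * r) :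
    Ca * (a + b) ≤ γ / 4 * r := by
  calc Ca * (a + b) ≤ Ca * (2 * (γ / (8 * Ca) * r)) := by
        gcongr; nlinarith [mul_le_mul_of_nonneg_right hc hr]
    _ = γ / 4 * r := by field_simp; ring

theorem stmt3_general {d : ℕ}
    (f : Euc d → ℝ)
    (xbar : Euc d) (M : Set (Euc d)) (hxbarM : xbar ∈ M)
    (δA γ β Ca : ℝ)
    (hδA : 0 < δA) (hCa : 0 < Ca)
    (P : Euc d → Euc d)
    (hP : ∀ z ∈ ball xbar (2*δA), P z ∈ M ∧ ‖z - P z‖ = Metric.infDist z M)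
    (Tsp : Euc d → Submodule ℝ (Euc d)) (Q : Euc d → Euc d → Euc d)
    (hQ : ∀ x ∈ ball xbar δA, ∀ v, Q x v = ((Tsp x).orthogonalProjectionOnto v : Euc d))
    (G : Euc d → Euc d)
    (hG : ∀ x ∈ ball xbar δA, G x ∈ Tsp x)
    (H4 : ∀ x ∈ ball xbar δA, ∀ σ ∈ Icc (0:ℝ) δA, ∀ g ∈ goldsteinSubdiff f σ x,
      ‖Q x (g - G x)‖ ≤ Ca * (Metric.infDist x M + σ))
    (H5 : ∀ x ∈ ball xbar δA, γ/2 * ‖P x - xbar‖ ≤ ‖G x‖ ∧ ‖G x‖ ≤ β * ‖P x - xbar‖)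
    (C₁ C₂ : ℝ)
    (hC₁ : C₁ = γ/4)
    (hC₂ : C₂ = min (γ/(8*Ca)) (min 1 (1/δA) / 2))
    (x : Euc d) (hx : x ∈ ball xbar δA) (σ : ℝ) (hσ : 0 ≤ σ)
    (hcond : max (Metric.infDist x M) σ ≤ C₂ * ‖P x - xbar‖)
    (g : Euc d) (hg : g ∈ goldsteinSubdiff f σ x) :
    C₁ * ‖P x - xbar‖ ≤ ‖Q x g‖ := by
  set r := ‖P x - xbar‖
  have hr : 0 ≤ r := norm_nonneg _
  have hdist : infDist x M ≤ C₂ * r := (le_max_left _ _).trans hcond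
  have hσr : σ ≤ C₂ * r := (le_max_right _ _).trans hcond
  have hr_le : r ≤ 2 * δA := by
    have hPx := (hP x (ball_subset_ball (by linarith) hx)).2
    have := dist_le_two_mul_dist_of_dist_eq_infDist hxbarM (by rwa [dist_eq_norm])
    rw [dist_eq_norm] at this
    linarith [mem_ball.mp hx]
  have hσδ : σ ≤ δA := by
    have : C₂ ≤ 1 / 2 := hC₂ ▸ (min_le_right _ _).trans (by gcongr; exact min_le_left _ _)
    nlinarith
  have hQx : ∀ v, Q x v = (Tsp x).starProjection v := fun v =>
    (hQ x hx v).trans ((Tsp x).starProjection_apply v).symm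
  have herr := (H4 x hx σ ⟨hσ, hσδ⟩ g hg).trans
    (mul_add_le_of_le_div hCa hr (hC₂ ▸ min_le_left _ _) hdist hσr)
  have hlow := (Tsp x).norm_sub_norm_starProjection_sub_le (hG x hx) g
  rw [← hQx, ← hQx] at hlow
  subst hC₁
  linarith [(H5 x hx).1]

theorem stmt3 {d : ℕ}
    (f : Euc d → ℝ) (hf : LocallyLipschitz f)
    (xbar : Euc d) (M : Set (Euc d)) (hxbarM : xbar ∈ M)
    (δA γ β Ca : ℝ)
    (hδA : 0 < δA) (hγ : 0 < γ) (hβ : 0 < β) (hCa : 0 < Ca)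
    (P : Euc d → Euc d)
    (hP : ∀ z ∈ ball xbar (2*δA), P z ∈ M ∧ ‖z - P z‖ = Metric.infDist z M)
    (Tsp : Euc d → Submodule ℝ (Euc d)) (Q : Euc d → Euc d → Euc d)
    (hQ : ∀ x ∈ ball xbar δA, ∀ v, Q x v = ((Tsp x).orthogonalProjectionOnto v : Euc d))
    (G : Euc d → Euc d)
    (hG : ∀ x ∈ ball xbar δA, G x ∈ Tsp x)
    (H4 : ∀ x ∈ ball xbar δA, ∀ σ ∈ Icc (0:ℝ) δA, ∀ g ∈ goldsteinSubdiff f σ x,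
      ‖Q x (g - G x)‖ ≤ Ca * (Metric.infDist x M + σ))
    (H5 : ∀ x ∈ ball xbar δA, γ/2 * ‖P x - xbar‖ ≤ ‖G x‖ ∧ ‖G x‖ ≤ β * ‖P x - xbar‖)
    (C₁ C₂ : ℝ)
    (hC₁ : C₁ = γ/4)
    (hC₂ : C₂ = min (γ/(8*Ca)) (min 1 (1/δA) / 2))
    (x : Euc d) (hx : x ∈ ball xbar δA) (σ : ℝ) (hσ : 0 ≤ σ)
    (hcond : max (Metric.infDist x M) σ ≤ C₂ * ‖P x - xbar‖)
    (g : Euc d) (hg : g ∈ goldsteinSubdiff f σ x) :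
    C₁ * ‖P x - xbar‖ ≤ ‖Q x g‖ :=
  stmt3_general f xbar M hxbarM δA γ β Ca hδA hCa P hP Tsp Q hQ G hG H4 H5 C₁ C₂ hC₁ hC₂ x hx σ hσ
    hcond g hg
end

section
/- Let f : ℝ^d → ℝ be locally Lipschitz and assume hypotheses (H1), (H2), (H3) of the setting. Then for every x ∈ ball(x̄, δ_A/2), every σ ∈ (0, δ_A/2], every nonzero g ∈ ∂_σ f(x), and every ĝ ∈ ∂f(x − σ·g/‖g‖): ⟨ĝ − Q_x ĝ, g⟩ ≤ −μ·‖g − Q_x g‖ + (μ + L)·‖g‖·dist(x, M)/σ + (μ + L)·‖g‖·C_M·(dist(x, M)² + σ²)/σ. -/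
/-!
Write `y = x - (σ/‖g‖) • g` for the step and `n` for the component of `x - y` normal to `T_x`.
Projection regularity says that `n` is, up to an error of order `C_M (dist(x, M)² + σ²)`, the
difference of the residuals `x - P x` and `y - P y`. Pairing with `ĝ ∈ ∂f(y)`, aiming bounds
`⟨ĝ, y - P y⟩` from below by `μ dist(y, M)`, the other two terms are at most `L` times their
norms, and the triangle inequality trades `dist(y, M)` for `‖n‖ - dist(x, M) - error`.
Since `x - y` is `σ/‖g‖` times `g`, dividing by this factor gives the bound.
-/

open Metric Set Filter
open scoped InnerProductSpace

section NormalComponent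

variable {F : Type*} [NormedAddCommGroup F] [InnerProductSpace ℝ F]

theorem inner_sub_map_le_of_aiming {Q : F →L[ℝ] F} {x y p p' v : F} {L μ ε : ℝ}
    (hμ : 0 ≤ μ) (hv : ‖v‖ ≤ L) (haim : μ * ‖y - p'‖ ≤ ⟪v, y - p'⟫_ℝ)
    (hreg : ‖p' - p - Q (y - x)‖ ≤ ε) :
    ⟪v, (x - y) - Q (x - y)⟫_ℝ ≤ -(μ * ‖(x - y) - Q (x - y)‖) + (μ + L) * (‖x - p‖ + ε) := by
  set e := p' - p - Q (y - x)
  have hdecomp : (x - y) - Q (x - y) = (x - p) - (y - p') - e := by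
    simp only [e, ← neg_sub x y, map_neg]
    abel
  have hL : 0 ≤ L := (norm_nonneg v).trans hv
  have hinner : ⟪v, (x - y) - Q (x - y)⟫_ℝ ≤ L * ‖x - p‖ - μ * ‖y - p'‖ + L * ‖e‖ := by
    rw [hdecomp, inner_sub_right, inner_sub_right]
    have hxp : ⟪v, x - p⟫_ℝ ≤ L * ‖x - p‖ :=
      (real_inner_le_norm v _).trans (mul_le_mul_of_nonneg_right hv (norm_nonneg _))
    have he : -⟪v, e⟫_ℝ ≤ L * ‖e‖ :=
      (neg_le_abs _).trans <| (abs_real_inner_le_norm v e).trans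
        (mul_le_mul_of_nonneg_right hv (norm_nonneg _))
    linarith
  have hnorm : ‖(x - y) - Q (x - y)‖ ≤ ‖x - p‖ + ‖y - p'‖ + ‖e‖ := by
    rw [hdecomp]
    exact (norm_sub_le _ _).trans (add_le_add_left (norm_sub_le _ _) _)
  linarith [mul_le_mul_of_nonneg_left hnorm hμ, mul_le_mul_of_nonneg_left hreg (add_nonneg hμ hL)]

theorem inner_sub_starProjection_le_of_aiming (K : Submodule ℝ F) [K.HasOrthogonalProjection]
    {x g p p' v : F} {σ L μ ε : ℝ} (hσ : 0 < σ) (hg : g ≠ 0) (hμ : 0 ≤ μ) (hv : ‖v‖ ≤ L)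
    (haim : μ * ‖x - (σ / ‖g‖) • g - p'‖ ≤ ⟪v, x - (σ / ‖g‖) • g - p'⟫_ℝ)
    (hreg : ‖p' - p - K.starProjection (x - (σ / ‖g‖) • g - x)‖ ≤ ε) :
    ⟪v - K.starProjection v, g⟫_ℝ
      ≤ -(μ * ‖g - K.starProjection g‖) + (μ + L) * ‖g‖ * (‖x - p‖ + ε) / σ := by
  have hc : 0 < σ / ‖g‖ := div_pos hσ (norm_pos_iff.mpr hg)
  have key := inner_sub_map_le_of_aiming hμ hv haim hreg
  rw [sub_sub_cancel, map_smul, ← smul_sub, real_inner_smul_right, norm_smul,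
    Real.norm_of_nonneg hc.le] at key
  rw [inner_sub_left, K.inner_starProjection_left_eq_right, ← inner_sub_right]
  have hscaled : ⟪v, g - K.starProjection g⟫_ℝ + μ * ‖g - K.starProjection g‖
      ≤ (μ + L) * ‖g‖ * (‖x - p‖ + ε) / σ := by
    refine ((le_div_iff₀' hc (b := (μ + L) * (‖x - p‖ + ε))).2 (by linarith)).trans_eq ?_
    rw [div_div_eq_mul_div]
    ring
  linarith

end NormalComponent

theorem stmt5_general {d : ℕ}
    (f : Euc d → ℝ)
    (xbar : Euc d) (M : Set (Euc d))
    (δA L μ CM : ℝ)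
    (hμ : 0 < μ)
    (P : Euc d → Euc d)
    (hP : ∀ z ∈ ball xbar (2*δA), P z ∈ M ∧ ‖z - P z‖ = Metric.infDist z M)
    (Tsp : Euc d → Submodule ℝ (Euc d)) (Q : Euc d → Euc d → Euc d)
    (hQ : ∀ x ∈ ball xbar δA, ∀ v, Q x v = ((Tsp x).orthogonalProjectionOnto v : Euc d))
    (H1 : ∀ x' ∈ ball xbar (2*δA), ∀ v ∈ clarkeSubdiff f x', ‖v‖ ≤ L)
    (H2 : ∀ x' ∈ ball xbar δA, ∀ v ∈ clarkeSubdiff f x',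
      μ * Metric.infDist x' M ≤ ⟪ v, x' - P x' ⟫_ℝ)
    (H3 : ∀ x ∈ ball xbar δA, ∀ x' ∈ ball xbar (2*δA),
      ‖P x' - P x - Q x (x' - x)‖ ≤ CM * (Metric.infDist x M ^ 2 + ‖x - x'‖ ^ 2))
    (x : Euc d) (hx : x ∈ ball xbar (δA/2)) (σ : ℝ) (hσ0 : 0 < σ) (hσ : σ ≤ δA/2)
    (g : Euc d) (hgne : g ≠ 0)
    (ghat : Euc d) (hghat : ghat ∈ clarkeSubdiff f (x - (σ/‖g‖) • g)) :
    ⟪ ghat - Q x ghat, g ⟫_ℝ ≤ -(μ * ‖g - Q x g‖)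
      + (μ + L) * ‖g‖ * Metric.infDist x M / σ
      + (μ + L) * ‖g‖ * CM * (Metric.infDist x M ^ 2 + σ^2) / σ := by
  have hδA : 0 < δA := by linarith [mem_ball.1 hx, dist_nonneg (x := x) (y := xbar)]
  have hxA : x ∈ ball xbar δA := ball_subset_ball (by linarith) hx
  have hx2A : x ∈ ball xbar (2 * δA) := ball_subset_ball (by linarith) hx
  set y := x - (σ / ‖g‖) • g
  have hyx : dist y x = σ := by
    rw [dist_self_sub_left, norm_smul, Real.norm_of_nonneg (div_pos hσ0 (norm_pos_iff.2 hgne)).le,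
      div_mul_cancel₀ _ (norm_ne_zero_iff.2 hgne)]
  have hyA : y ∈ ball xbar δA := mem_ball.2 (by linarith [dist_triangle y x xbar, mem_ball.1 hx])
  have hy2A : y ∈ ball xbar (2 * δA) := ball_subset_ball (by linarith) hyA
  have hQx : Q x = (Tsp x).starProjection := funext (hQ x hxA)
  have haim := H2 y hyA ghat hghat
  rw [← (hP y hy2A).2] at haim
  have hreg := H3 x hxA y hy2A
  rw [hQx, ← dist_eq_norm x y, dist_comm x y, hyx] at hreg
  have key := inner_sub_starProjection_le_of_aiming (Tsp x) hσ0 hgne hμ.le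
    (H1 y hy2A ghat hghat) haim hreg
  rw [(hP x hx2A).2] at key
  rw [hQx]
  exact key.trans_eq (by ring)

theorem stmt5 {d : ℕ}
    (f : Euc d → ℝ) (hf : LocallyLipschitz f)
    (xbar : Euc d) (M : Set (Euc d)) (hxbarM : xbar ∈ M)
    (δA L μ CM : ℝ)
    (hδA : 0 < δA) (hL : 0 < L) (hμ : 0 < μ) (hCM : 0 < CM)
    (P : Euc d → Euc d)
    (hP : ∀ z ∈ ball xbar (2*δA), P z ∈ M ∧ ‖z - P z‖ = Metric.infDist z M)
    (Tsp : Euc d → Submodule ℝ (Euc d)) (Q : Euc d → Euc d → Euc d)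
    (hQ : ∀ x ∈ ball xbar δA, ∀ v, Q x v = ((Tsp x).orthogonalProjectionOnto v : Euc d))
    (H1 : ∀ x' ∈ ball xbar (2*δA), ∀ v ∈ clarkeSubdiff f x', ‖v‖ ≤ L)
    (H2 : ∀ x' ∈ ball xbar δA, ∀ v ∈ clarkeSubdiff f x',
      μ * Metric.infDist x' M ≤ ⟪ v, x' - P x' ⟫_ℝ)
    (H3 : ∀ x ∈ ball xbar δA, ∀ x' ∈ ball xbar (2*δA),
      ‖P x' - P x - Q x (x' - x)‖ ≤ CM * (Metric.infDist x M ^ 2 + ‖x - x'‖ ^ 2))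
    (x : Euc d) (hx : x ∈ ball xbar (δA/2)) (σ : ℝ) (hσ0 : 0 < σ) (hσ : σ ≤ δA/2)
    (g : Euc d) (hg : g ∈ goldsteinSubdiff f σ x) (hgne : g ≠ 0)
    (ghat : Euc d) (hghat : ghat ∈ clarkeSubdiff f (x - (σ/‖g‖) • g)) :
    ⟪ ghat - Q x ghat, g ⟫_ℝ ≤ -(μ * ‖g - Q x g‖)
      + (μ + L) * ‖g‖ * Metric.infDist x M / σ
      + (μ + L) * ‖g‖ * CM * (Metric.infDist x M ^ 2 + σ^2) / σ :=
  stmt5_general f xbar M δA L μ CM hμ P hP Tsp Q hQ H1 H2 H3 x hx σ hσ0 hσ g hgne ghat hghat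
end

section
/- Let f : ℝ^d → ℝ be locally Lipschitz and assume hypotheses (H1)–(H5) of the setting. Define D₂ := μ/2, C₃ := (γ/4)²/(8L), C₄ := min{β/(C_a(1+δ_A)), min{μ/δ_A, C₃D₂/β}/(4(1+(1+δ_A)C_M)(μ+L)), 1/2}. Then for every x ∈ ball(x̄, δ_A/2), every σ > 0, every nonzero g ∈ ∂_σ f(x) with max{dist(x, M)/σ, σ} ≤ C₄·‖P x − x̄‖, and every ĝ ∈ ∂f(x − σ·g/‖g‖): ⟨ĝ − Q_x ĝ, g⟩ ≤ −D₂·‖g − Q_x g‖ + (C₃D₂/2)·‖P x − x̄‖². -/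
open Metric Set Filter
open scoped InnerProductSpace

/-!
Put `t = σ / ‖g‖` and `x' = x - t • g`, so `‖x - x'‖ = σ`. Since `Q_x (x' - x) = -t • Q_x g`, the
regularity (H3) of `P` gives `t • (g - Q_x g) = (x - P x) - (x' - P x') - E` with
`‖E‖ ≤ C_M (dist(x, M)² + σ²)`. Pairing with `ĝ ∈ ∂f(x')`, aiming (H2) at `x'` and `‖ĝ‖ ≤ L` give
`σ ⟪ĝ, g - Q_x g⟫ ≤ -μ σ ‖g - Q_x g‖ + (L + μ) ‖g‖ (dist(x, M) + ‖E‖)`.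
The step condition makes `dist(x, M) + ‖E‖ ≤ (1 + (1 + δ_A) C_M) C₄ ‖P x - x̄‖ σ`, and (H4), (H5)
give `‖g‖ ≤ ‖g - Q_x g‖ + 2 β ‖P x - x̄‖`; the three constraints in `C₄` then absorb the error into
`(μ/4) ‖g - Q_x g‖ + (C₃ μ / 4) ‖P x - x̄‖²`. Finally `Q_x` is self-adjoint, so
`⟪ĝ - Q_x ĝ, g⟫ = ⟪ĝ, g - Q_x g⟫`.
-/

section InnerProductSpace

variable {E : Type*} [NormedAddCommGroup E]

lemma norm_sub_lt_of_mem_ball_half {M : Set E} {xbar x p : E} {δ : ℝ} (hxbar : xbar ∈ M)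
    (hx : x ∈ ball xbar (δ / 2)) (hp : ‖x - p‖ = infDist x M) : ‖p - xbar‖ < δ := by
  have hD : infDist x M ≤ dist x xbar := infDist_le_dist_of_mem hxbar
  rw [mem_ball] at hx
  calc ‖p - xbar‖ ≤ ‖x - p‖ + ‖x - xbar‖ := by
        rw [norm_sub_rev x p]; exact norm_sub_le_norm_sub_add_norm_sub _ _ _
    _ < δ := by rw [hp, ← dist_eq_norm]; linarith

lemma mem_ball_of_norm_sub_eq {xbar x y : E} {σ δ : ℝ} (hx : x ∈ ball xbar (δ / 2))
    (hxy : ‖x - y‖ = σ) (hσ : σ < δ / 2) : y ∈ ball xbar δ := by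
  rw [mem_ball] at hx ⊢
  linarith [dist_triangle y x xbar, dist_comm y x, dist_eq_norm x y]

variable [InnerProductSpace ℝ E]

lemma inner_le_of_eq_sub_sub_of_aiming {u a b e v : E} {μ L : ℝ} (hμ : 0 ≤ μ)
    (hu : u = a - b - e) (hv : ‖v‖ ≤ L) (haim : μ * ‖b‖ ≤ ⟪v, b⟫_ℝ) :
    ⟪v, u⟫_ℝ ≤ -(μ * ‖u‖) + (L + μ) * (‖a‖ + ‖e‖) := by
  have hu_le : ‖u‖ ≤ ‖a‖ + ‖b‖ + ‖e‖ :=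
    hu ▸ (norm_sub_le _ _).trans (by gcongr; exact norm_sub_le _ _)
  have ha : ⟪v, a⟫_ℝ ≤ L * ‖a‖ :=
    (real_inner_le_norm v a).trans (mul_le_mul_of_nonneg_right hv (norm_nonneg a))
  have he : ⟪v, -e⟫_ℝ ≤ L * ‖e‖ := by
    simpa only [norm_neg] using
      (real_inner_le_norm v (-e)).trans (mul_le_mul_of_nonneg_right hv (norm_nonneg (-e)))
  have hvu : ⟪v, u⟫_ℝ = ⟪v, a⟫_ℝ - ⟪v, b⟫_ℝ + ⟪v, -e⟫_ℝ := by
    rw [hu, inner_sub_right, inner_sub_right, inner_neg_right, sub_eq_add_neg]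
  linarith [mul_le_mul_of_nonneg_left hu_le hμ]

lemma mul_inner_sub_le_of_aiming (Q : E →L[ℝ] E) {x p x' p' g v : E} {t μ L : ℝ}
    (hμ : 0 ≤ μ) (ht : 0 ≤ t) (hx' : x' = x - t • g) (hv : ‖v‖ ≤ L)
    (haim : μ * ‖x' - p'‖ ≤ ⟪v, x' - p'⟫_ℝ) :
    t * ⟪v, g - Q g⟫_ℝ ≤
      -(μ * (t * ‖g - Q g‖)) + (L + μ) * (‖x - p‖ + ‖p' - p - Q (x' - x)‖) := by
  have key : t • (g - Q g) = (x - p) - (x' - p') - (p' - p - Q (x' - x)) := by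
    rw [hx', sub_sub_cancel_left, map_neg, map_smul]
    module
  have := inner_le_of_eq_sub_sub_of_aiming hμ key hv haim
  rwa [real_inner_smul_right, norm_smul, Real.norm_of_nonneg ht] at this

lemma norm_le_norm_sub_starProjection_add (K : Submodule ℝ E) [K.HasOrthogonalProjection]
    (g : E) {w : E} (hw : w ∈ K) :
    ‖g‖ ≤ ‖g - K.starProjection g‖ + (‖K.starProjection (g - w)‖ + ‖w‖) := by
  have hg : g = (g - K.starProjection g) + (K.starProjection (g - w) + w) := by
    rw [map_sub, K.starProjection_eq_self_iff.mpr hw]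
    abel
  calc ‖g‖ = ‖(g - K.starProjection g) + (K.starProjection (g - w) + w)‖ := congrArg norm hg
    _ ≤ _ := (norm_add_le _ _).trans (by gcongr; exact norm_add_le _ _)

lemma inner_sub_starProjection_left_eq_right (K : Submodule ℝ E) [K.HasOrthogonalProjection]
    (u v : E) : ⟪u - K.starProjection u, v⟫_ℝ = ⟪u, v - K.starProjection v⟫_ℝ := by
  rw [inner_sub_left, inner_sub_right, K.inner_starProjection_left_eq_right]

end InnerProductSpace

lemma C₄_bounds {δA L μ β Ca CM C₃ C₄ : ℝ} (hδA : 0 < δA) (hL : 0 ≤ L) (hμ : 0 < μ)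
    (hβ : 0 < β) (hCa : 0 < Ca) (hCM : 0 ≤ CM)
    (hC₄ : C₄ = min (β / (Ca * (1 + δA)))
      (min (min (μ / δA) (C₃ * (μ / 2) / β) / (4 * (1 + (1 + δA) * CM) * (μ + L))) (1 / 2))) :
    Ca * (1 + δA) * C₄ ≤ β ∧
      4 * (μ + L) * ((1 + (1 + δA) * CM) * C₄) * δA ≤ μ ∧
      8 * (μ + L) * ((1 + (1 + δA) * CM) * C₄) * β ≤ C₃ * μ ∧ C₄ ≤ 1 / 2 := by
  have h₁ : C₄ ≤ β / (Ca * (1 + δA)) := hC₄ ▸ min_le_left _ _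
  have h₂ : C₄ ≤ min (μ / δA) (C₃ * (μ / 2) / β) / (4 * (1 + (1 + δA) * CM) * (μ + L)) :=
    hC₄ ▸ (min_le_right _ _).trans (min_le_left _ _)
  have h₃ : C₄ ≤ 1 / 2 := hC₄ ▸ (min_le_right _ _).trans (min_le_right _ _)
  rw [le_div_iff₀ (by positivity)] at h₁ h₂
  have h₂δ := h₂.trans (min_le_left _ _)
  have h₂β := h₂.trans (min_le_right _ _)
  rw [le_div_iff₀ hδA] at h₂δ
  rw [le_div_iff₀ hβ] at h₂β
  exact ⟨by linarith, by linarith, by linarith, h₃⟩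

lemma add_mul_sq_add_sq_le {D σ ρ δ C : ℝ} (hC : 0 ≤ C) (hD : 0 ≤ D) (hσ : 0 ≤ σ)
    (hDδ : D ≤ δ) (hDρ : D ≤ ρ * σ) (hσρ : σ ≤ ρ) :
    D + C * (D ^ 2 + σ ^ 2) ≤ (1 + (1 + δ) * C) * ρ * σ := by
  have hD2 : D ^ 2 ≤ ρ * σ * δ := by nlinarith
  have hσ2 : σ ^ 2 ≤ ρ * σ := by nlinarith
  nlinarith

lemma le_of_mul_le_of_error_le {t σ μ L β C₃ κ r δ ng gn S ip : ℝ}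
    (hσ : 0 < σ) (hμ : 0 ≤ μ) (hL : 0 ≤ L) (hκ : 0 ≤ κ) (hr : 0 ≤ r) (hrδ : r ≤ δ)
    (hng : 0 ≤ ng) (hgn₀ : 0 ≤ gn) (htg : t * gn = σ)
    (hmain : t * ip ≤ -(μ * (t * ng)) + (L + μ) * S)
    (hgn : gn ≤ ng + 2 * (β * r)) (hSσ : S ≤ κ * r * σ)
    (hκδ : 4 * (μ + L) * κ * δ ≤ μ) (hκβ : 8 * (μ + L) * κ * β ≤ C₃ * μ) :
    ip ≤ -(μ / 2 * ng) + C₃ * (μ / 2) / 2 * r ^ 2 := by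
  have hκr : 4 * (μ + L) * κ * r ≤ μ :=
    (mul_le_mul_of_nonneg_left hrδ (by positivity)).trans hκδ
  have herr : (L + μ) * S * gn ≤ σ * (μ / 4 * ng + C₃ * μ / 4 * r ^ 2) := by
    calc (L + μ) * S * gn ≤ (L + μ) * (κ * r * σ) * (ng + 2 * (β * r)) := by gcongr
      _ = σ * ((μ + L) * κ * r * ng + 2 * (μ + L) * κ * β * r ^ 2) := by ring
      _ ≤ σ * (μ / 4 * ng + C₃ * μ / 4 * r ^ 2) := by gcongr <;> nlinarith
  have hσip : σ * ip ≤ -(μ * (σ * ng)) + (L + μ) * S * gn := by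
    rw [← htg]
    nlinarith [mul_le_mul_of_nonneg_left hmain hgn₀]
  refine le_of_mul_le_mul_left ?_ hσ
  linarith [mul_nonneg (mul_nonneg hσ.le hμ) hng]

theorem stmt6_general {d : ℕ}
    (f : Euc d → ℝ)
    (xbar : Euc d) (M : Set (Euc d)) (hxbarM : xbar ∈ M)
    (δA L μ γ β Ca CM : ℝ)
    (hδA : 0 < δA) (hL : 0 < L) (hμ : 0 < μ) (hβ : 0 < β)
    (hCa : 0 < Ca) (hCM : 0 < CM)
    (P : Euc d → Euc d)
    (hP : ∀ z ∈ ball xbar (2*δA), P z ∈ M ∧ ‖z - P z‖ = Metric.infDist z M)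
    (Tsp : Euc d → Submodule ℝ (Euc d)) (Q : Euc d → Euc d → Euc d)
    (hQ : ∀ x ∈ ball xbar δA, ∀ v, Q x v = ((Tsp x).orthogonalProjectionOnto v : Euc d))
    (G : Euc d → Euc d)
    (hG : ∀ x ∈ ball xbar δA, G x ∈ Tsp x)
    (H1 : ∀ x' ∈ ball xbar (2*δA), ∀ v ∈ clarkeSubdiff f x', ‖v‖ ≤ L)
    (H2 : ∀ x' ∈ ball xbar δA, ∀ v ∈ clarkeSubdiff f x',
      μ * Metric.infDist x' M ≤ ⟪ v, x' - P x' ⟫_ℝ)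
    (H3 : ∀ x ∈ ball xbar δA, ∀ x' ∈ ball xbar (2*δA),
      ‖P x' - P x - Q x (x' - x)‖ ≤ CM * (Metric.infDist x M ^ 2 + ‖x - x'‖ ^ 2))
    (H4 : ∀ x ∈ ball xbar δA, ∀ σ ∈ Icc (0:ℝ) δA, ∀ g ∈ goldsteinSubdiff f σ x,
      ‖Q x (g - G x)‖ ≤ Ca * (Metric.infDist x M + σ))
    (H5 : ∀ x ∈ ball xbar δA, γ/2 * ‖P x - xbar‖ ≤ ‖G x‖ ∧ ‖G x‖ ≤ β * ‖P x - xbar‖)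
    (D₂ C₃ C₄ : ℝ)
    (hD₂ : D₂ = μ/2)
    (hC₄ : C₄ = min (β/(Ca*(1+δA)))
      (min (min (μ/δA) (C₃*D₂/β) / (4*(1+(1+δA)*CM)*(μ+L))) (1/2)))
    (x : Euc d) (hx : x ∈ ball xbar (δA/2)) (σ : ℝ) (hσ : 0 < σ)
    (g : Euc d) (hg : g ∈ goldsteinSubdiff f σ x) (hgne : g ≠ 0)
    (hcond : max (Metric.infDist x M / σ) σ ≤ C₄ * ‖P x - xbar‖)
    (ghat : Euc d) (hghat : ghat ∈ clarkeSubdiff f (x - (σ/‖g‖) • g)) :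
    ⟪ ghat - Q x ghat, g ⟫_ℝ ≤ -(D₂ * ‖g - Q x g‖) + C₃*D₂/2 * ‖P x - xbar‖^2 := by
  subst hD₂
  set r := ‖P x - xbar‖
  obtain ⟨hC₄Ca, hC₄δ, hC₄β, hC₄half⟩ := C₄_bounds hδA hL.le hμ hβ hCa hCM.le hC₄
  have hσρ : σ ≤ C₄ * r := (le_max_right _ _).trans hcond
  have hDρ : infDist x M ≤ C₄ * r * σ := (div_le_iff₀ hσ).mp ((le_max_left _ _).trans hcond)
  have hC₄ : 0 < C₄ := pos_of_mul_pos_left (hσ.trans_le hσρ) (norm_nonneg _)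
  have hx₁ : x ∈ ball xbar δA := ball_subset_ball (by linarith) hx
  have hPx := (hP x (ball_subset_ball (by linarith) hx)).2
  have hD : infDist x M < δA / 2 := (infDist_le_dist_of_mem hxbarM).trans_lt (mem_ball.mp hx)
  have hr : r < δA := norm_sub_lt_of_mem_ball_half hxbarM hx hPx
  have hσδ : σ < δA / 2 := by nlinarith [norm_nonneg (P x - xbar)]
  set x' := x - (σ / ‖g‖) • g with hx'
  have hxx' : ‖x - x'‖ = σ := by
    rw [hx', sub_sub_cancel, norm_smul, Real.norm_of_nonneg (by positivity),
      div_mul_cancel₀ _ (norm_ne_zero_iff.mpr hgne)]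
  have hx'₁ : x' ∈ ball xbar δA := mem_ball_of_norm_sub_eq hx hxx' hσδ
  have hx'₂ : x' ∈ ball xbar (2 * δA) := ball_subset_ball (by linarith) hx'₁
  have hQx : Q x = (Tsp x).starProjection := funext (hQ x hx₁)
  have hE := H3 x hx₁ x' hx'₂
  have hQG := H4 x hx₁ σ ⟨hσ.le, by linarith⟩ g hg
  rw [hQx, hxx'] at hE
  rw [hQx] at hQG ⊢
  rw [inner_sub_starProjection_left_eq_right]
  have hmain := mul_inner_sub_le_of_aiming (Tsp x).starProjection (p := P x) hμ.le
    (by positivity) hx' (H1 x' hx'₂ ghat hghat) ((hP x' hx'₂).2 ▸ H2 x' hx'₁ ghat hghat)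
  have hgn := norm_le_norm_sub_starProjection_add (Tsp x) g (hG x hx₁)
  have hDσ : infDist x M + σ ≤ (1 + δA) * (C₄ * r) := by
    nlinarith [mul_le_mul_of_nonneg_left hσδ.le (mul_pos hC₄ (hσ.trans_le hσρ)).le]
  refine le_of_mul_le_of_error_le hσ hμ.le hL.le (by positivity) (norm_nonneg _) hr.le
    (norm_nonneg _) (norm_nonneg _) (div_mul_cancel₀ _ (norm_ne_zero_iff.mpr hgne)) hmain
    ?_ ?_ hC₄δ hC₄β
  · nlinarith [(H5 x hx₁).2, mul_le_mul_of_nonneg_left hDσ hCa.le, hC₄Ca]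
  · rw [hPx]
    nlinarith [add_mul_sq_add_sq_le hCM.le infDist_nonneg hσ.le
      (hD.trans (half_lt_self hδA)).le hDρ hσρ]

theorem stmt6 {d : ℕ}
    (f : Euc d → ℝ) (hf : LocallyLipschitz f)
    (xbar : Euc d) (M : Set (Euc d)) (hxbarM : xbar ∈ M)
    (δA L μ γ β Ca CM : ℝ)
    (hδA : 0 < δA) (hL : 0 < L) (hμ : 0 < μ) (hγ : 0 < γ) (hβ : 0 < β)
    (hCa : 0 < Ca) (hCM : 0 < CM)
    (P : Euc d → Euc d)
    (hP : ∀ z ∈ ball xbar (2*δA), P z ∈ M ∧ ‖z - P z‖ = Metric.infDist z M)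
    (Tsp : Euc d → Submodule ℝ (Euc d)) (Q : Euc d → Euc d → Euc d)
    (hQ : ∀ x ∈ ball xbar δA, ∀ v, Q x v = ((Tsp x).orthogonalProjectionOnto v : Euc d))
    (G : Euc d → Euc d)
    (hG : ∀ x ∈ ball xbar δA, G x ∈ Tsp x)
    (H1 : ∀ x' ∈ ball xbar (2*δA), ∀ v ∈ clarkeSubdiff f x', ‖v‖ ≤ L)
    (H2 : ∀ x' ∈ ball xbar δA, ∀ v ∈ clarkeSubdiff f x',
      μ * Metric.infDist x' M ≤ ⟪ v, x' - P x' ⟫_ℝ)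
    (H3 : ∀ x ∈ ball xbar δA, ∀ x' ∈ ball xbar (2*δA),
      ‖P x' - P x - Q x (x' - x)‖ ≤ CM * (Metric.infDist x M ^ 2 + ‖x - x'‖ ^ 2))
    (H4 : ∀ x ∈ ball xbar δA, ∀ σ ∈ Icc (0:ℝ) δA, ∀ g ∈ goldsteinSubdiff f σ x,
      ‖Q x (g - G x)‖ ≤ Ca * (Metric.infDist x M + σ))
    (H5 : ∀ x ∈ ball xbar δA, γ/2 * ‖P x - xbar‖ ≤ ‖G x‖ ∧ ‖G x‖ ≤ β * ‖P x - xbar‖)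
    (D₂ C₃ C₄ : ℝ)
    (hD₂ : D₂ = μ/2)
    (hC₃ : C₃ = (γ/4)^2/(8*L))
    (hC₄ : C₄ = min (β/(Ca*(1+δA)))
      (min (min (μ/δA) (C₃*D₂/β) / (4*(1+(1+δA)*CM)*(μ+L))) (1/2)))
    (x : Euc d) (hx : x ∈ ball xbar (δA/2)) (σ : ℝ) (hσ : 0 < σ)
    (g : Euc d) (hg : g ∈ goldsteinSubdiff f σ x) (hgne : g ≠ 0)
    (hcond : max (Metric.infDist x M / σ) σ ≤ C₄ * ‖P x - xbar‖)
    (ghat : Euc d) (hghat : ghat ∈ clarkeSubdiff f (x - (σ/‖g‖) • g)) :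
    ⟪ ghat - Q x ghat, g ⟫_ℝ ≤ -(D₂ * ‖g - Q x g‖) + C₃*D₂/2 * ‖P x - xbar‖^2 :=
  stmt6_general f xbar M hxbarM δA L μ γ β Ca CM hδA hL hμ hβ hCa hCM P hP Tsp Q hQ G hG H1 H2 H3 H4
    H5 D₂ C₃ C₄ hD₂ hC₄ x hx σ hσ g hg hgne hcond ghat hghat
end

section
/- Let f : ℝ^d → ℝ be locally Lipschitz and assume hypotheses (H1)–(H5) of the setting. Define D₂ := μ/2, C₁ := γ/4, C₂ := min{γ/(8C_a), min{1, 1/δ_A}/2}, C₃ := C₁²/(8L), C₄ := min{β/(C_a(1+δ_A)), min{μ/δ_A, C₃D₂/β}/(4(1+(1+δ_A)C_M)(μ+L)), 1/2}, C₅ := min{β/(2C_a), C₃D₂/(32C_aβ), C₄, C₂/4}. Then for every x ∈ ball(x̄, δ_A/2), every σ > 0, every nonzero g ∈ ∂_σ f(x), and every nonzero ĝ ∈ ∂f(x − σ·g/‖g‖), if ‖g − Q_x g‖ ≥ C₃·‖P x − x̄‖² and max{dist(x, M)/σ, σ} ≤ C₅·‖P x − x̄‖, then every minimal-norm element g' of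 the segment [g, ĝ] satisfies ‖g' − Q_x g'‖² ≤ (1 − 3D₂²/(64L²))·‖g − Q_x g‖². -/
/-!
Write `N v = v - Q v` for the normal part. The aiming inequality (H2) at `y = x - σ g / ‖g‖`,
combined with the expansion (H3) of `P` along the step `y - x = -(σ/‖g‖) g`, gives
`⟪ĝ, N g⟫ ≤ -D₂ ‖N g‖`: the new gradient pushes back against the normal part of `g`.
By (H4) the tangential parts `Q g`, `Q ĝ` lie within `ε = C_a (dist(x, M) + σ)` of `G_x`, and the
choice of `C₅` makes the cross error `η = 2ε(β ‖P x - x̄‖ + ε)` at most `9/64 · D₂ ‖N g‖`.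
The min-norm point `g' = g + t (ĝ - g)` then satisfies `‖N g'‖² ≤ ‖N g‖² - t S` with
`S = ‖N g‖² + D₂ ‖N g‖ - η ≥ 55/64 · D₂ ‖N g‖`, while optimality along the segment forces
`4 L² t ≥ S`; hence `t S ≥ S² / (4 L²) ≥ 3 D₂² ‖N g‖² / (64 L²)`.
-/

open Metric Set Filter
open scoped InnerProductSpace

theorem clarkeSubdiff_subset_goldsteinSubdiff {d : ℕ} {f : Euc d → ℝ} {σ : ℝ} {x y : Euc d}
    (hy : y ∈ closedBall x σ) : clarkeSubdiff f y ⊆ goldsteinSubdiff f σ x :=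
  fun _ hv => subset_convexHull ℝ _ (mem_biUnion hy hv)

theorem goldsteinSubdiff_subset_closedBall {d : ℕ} {f : Euc d → ℝ} {σ L : ℝ} {x : Euc d}
    (h : ∀ y ∈ closedBall x σ, ∀ v ∈ clarkeSubdiff f y, ‖v‖ ≤ L) :
    goldsteinSubdiff f σ x ⊆ closedBall 0 L :=
  convexHull_min (iUnion₂_subset fun y hy v hv => mem_closedBall_zero_iff.mpr (h y hy v hv))
    (convex_closedBall 0 L)

namespace Submodule

variable {E : Type*} [NormedAddCommGroup E] [InnerProductSpace ℝ E]
  (K : Submodule ℝ E) [K.HasOrthogonalProjection]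

local notation "𝐐" => K.starProjection

theorem norm_sq_eq_norm_sq_starProjection_add (v : E) : ‖v‖ ^ 2 = ‖𝐐 v‖ ^ 2 + ‖v - 𝐐 v‖ ^ 2 := by
  simpa using K.norm_sq_eq_add_norm_sq_starProjection v

theorem real_inner_eq_inner_starProjection_add (v u : E) :
    ⟪v, u⟫_ℝ = ⟪𝐐 v, 𝐐 u⟫_ℝ + ⟪v, u - 𝐐 u⟫_ℝ := by
  have h := K.starProjection_inner_eq_zero v _ (K.starProjection_apply_mem u)
  rw [inner_sub_left] at h
  rw [inner_sub_right]
  linarith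

theorem starProjection_mem_closedBall {v G : E} {ε : ℝ} (hG : G ∈ K) (h : ‖𝐐 (v - G)‖ ≤ ε) :
    𝐐 v ∈ closedBall G ε := by
  rwa [mem_closedBall_iff_norm, ← K.starProjection_eq_self_iff.mpr hG, ← map_sub]

end Submodule

section

variable {E : Type*} [NormedAddCommGroup E] [InnerProductSpace ℝ E]

theorem real_inner_sub_nonneg_of_isMinOn_norm {s : Set E} (hs : Convex ℝ s) {p : E} (hp : p ∈ s)
    (hmin : IsMinOn (‖·‖) s p) {w : E} (hw : w ∈ s) : 0 ≤ ⟪p, w - p⟫_ℝ := by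
  have : Nonempty s := ⟨⟨p, hp⟩⟩
  have hinf : ‖0 - p‖ = ⨅ w : s, ‖0 - (w : E)‖ := by
    refine le_antisymm (le_ciInf fun w => by simpa using isMinOn_iff.mp hmin w w.2) ?_
    exact ciInf_le ⟨0, by rintro _ ⟨w, rfl⟩; exact norm_nonneg _⟩ (⟨p, hp⟩ : s)
  have := (norm_eq_iInf_iff_real_inner_le_zero hs hp).mp hinf w hw
  rw [zero_sub, inner_neg_left] at this
  linarith

theorem neg_inner_le_mul_norm_sq_of_isMinOn_segment {g h : E} {t : ℝ} (ht : t ∈ Ico (0 : ℝ) 1)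
    (hmin : IsMinOn (‖·‖) (segment ℝ g h) (g + t • (h - g))) :
    -⟪g, h - g⟫_ℝ ≤ t * ‖h - g‖ ^ 2 := by
  have hp : g + t • (h - g) ∈ segment ℝ g h := by
    rw [segment_eq_image']; exact ⟨t, Ico_subset_Icc_self ht, rfl⟩
  have h₁ := real_inner_sub_nonneg_of_isMinOn_norm (convex_segment g h) hp hmin
    (right_mem_segment ℝ g h)
  have h₂ : h - (g + t • (h - g)) = (1 - t) • (h - g) := by module
  rw [h₂, real_inner_smul_right, inner_add_left, real_inner_smul_left,
    real_inner_self_eq_norm_sq] at h₁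
  nlinarith [ht.2]

theorem real_inner_sub_le_of_mem_closedBall {G u v w : E} {b ε : ℝ} (hG : ‖G‖ ≤ b)
    (hu : u ∈ closedBall G ε) (hv : v ∈ closedBall G ε) (hw : w ∈ closedBall G ε) :
    ⟪u, v - w⟫_ℝ ≤ 2 * ε * (b + ε) := by
  rw [mem_closedBall_iff_norm] at hu hv hw
  have hu' : ‖u‖ ≤ b + ε := (norm_le_norm_add_norm_sub' u G).trans (by linarith)
  have hvw : ‖v - w‖ ≤ 2 * ε := (norm_sub_le_norm_sub_add_norm_sub v G w).trans
    (by rw [norm_sub_rev G]; linarith)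
  calc ⟪u, v - w⟫_ℝ ≤ ‖u‖ * ‖v - w‖ := real_inner_le_norm _ _
    _ ≤ (b + ε) * (2 * ε) := mul_le_mul hu' hvw (norm_nonneg _) ((norm_nonneg u).trans hu')
    _ = 2 * ε * (b + ε) := by ring

end

namespace Submodule

variable {E : Type*} [NormedAddCommGroup E] [InnerProductSpace ℝ E]
  (K : Submodule ℝ E) [K.HasOrthogonalProjection]
  {g ĝ G : E} {b c ε : ℝ}

local notation "𝐐" => K.starProjection

theorem real_inner_sub_le_of_inner_sub_starProjection_le (hG : ‖G‖ ≤ b)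
    (hQg : 𝐐 g ∈ closedBall G ε) (hQĝ : 𝐐 ĝ ∈ closedBall G ε)
    (hdesc : ⟪ĝ, g - 𝐐 g⟫_ℝ ≤ -(c * ‖g - 𝐐 g‖)) :
    ⟪g, ĝ - g⟫_ℝ ≤ 2 * ε * (b + ε) - c * ‖g - 𝐐 g‖ - ‖g - 𝐐 g‖ ^ 2 := by
  have h₁ := K.real_inner_eq_inner_starProjection_add ĝ g
  have h₂ := K.norm_sq_eq_norm_sq_starProjection_add g
  have h₃ := real_inner_sub_le_of_mem_closedBall hG hQg hQĝ hQg
  rw [inner_sub_right, real_inner_comm, real_inner_self_eq_norm_sq]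
  rw [inner_sub_right, real_inner_self_eq_norm_sq, real_inner_comm] at h₃
  linarith

theorem norm_sub_starProjection_sq_le_sub_mul_of_isMinOn_segment {t : ℝ}
    (ht : t ∈ Icc (0 : ℝ) 1) (hG : ‖G‖ ≤ b)
    (hQg : 𝐐 g ∈ closedBall G ε) (hQĝ : 𝐐 ĝ ∈ closedBall G ε)
    (hdesc : ⟪ĝ, g - 𝐐 g⟫_ℝ ≤ -(c * ‖g - 𝐐 g‖))
    (hmin : IsMinOn (‖·‖) (segment ℝ g ĝ) (g + t • (ĝ - g))) :
    ‖g + t • (ĝ - g) - 𝐐 (g + t • (ĝ - g))‖ ^ 2 ≤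
      ‖g - 𝐐 g‖ ^ 2 - t * (‖g - 𝐐 g‖ ^ 2 + c * ‖g - 𝐐 g‖ - 2 * ε * (b + ε)) := by
  set p := g + t • (ĝ - g) with hp_def
  set a := ‖g - 𝐐 g‖
  have hp : p ∈ segment ℝ g ĝ := by rw [segment_eq_image']; exact ⟨t, ht, rfl⟩
  have hpg : ‖p‖ ^ 2 ≤ ⟪p, g⟫_ℝ := by
    have := real_inner_sub_nonneg_of_isMinOn_norm (convex_segment g ĝ) hp hmin
      (left_mem_segment ℝ g ĝ)
    rwa [inner_sub_right, real_inner_self_eq_norm_sq, sub_nonneg] at this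
  have hQp : 𝐐 p = 𝐐 g + t • (𝐐 ĝ - 𝐐 g) := by rw [hp_def, map_add, map_smul, map_sub]
  have hQp_mem : 𝐐 p ∈ closedBall G ε := by
    refine (convex_closedBall G ε).segment_subset hQg hQĝ ?_
    rw [hQp, segment_eq_image']; exact ⟨t, ht, rfl⟩
  have htan : ⟪𝐐 p, 𝐐 g⟫_ℝ - ‖𝐐 p‖ ^ 2 ≤ t * (2 * ε * (b + ε)) := by
    have he : 𝐐 g - 𝐐 p = t • (𝐐 g - 𝐐 ĝ) := by rw [hQp]; module
    rw [← real_inner_self_eq_norm_sq, ← inner_sub_right, he, real_inner_smul_right]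
    exact mul_le_mul_of_nonneg_left (real_inner_sub_le_of_mem_closedBall hG hQp_mem hQg hQĝ) ht.1
  have hgg : ⟪g, g - 𝐐 g⟫_ℝ = a ^ 2 := by
    have := K.real_inner_eq_inner_starProjection_add g g
    rw [real_inner_self_eq_norm_sq, real_inner_self_eq_norm_sq,
      K.norm_sq_eq_norm_sq_starProjection_add g] at this
    linarith
  have hpN : ⟪p, g - 𝐐 g⟫_ℝ = a ^ 2 + t * (⟪ĝ, g - 𝐐 g⟫_ℝ - a ^ 2) := by
    rw [hp_def, inner_add_left, real_inner_smul_left, inner_sub_left, hgg]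
  have := K.real_inner_eq_inner_starProjection_add p g
  have := K.norm_sq_eq_norm_sq_starProjection_add p
  nlinarith [ht.1]

theorem le_mul_sq_of_isMinOn_segment {L t : ℝ} (ht : t ∈ Icc (0 : ℝ) 1)
    (hg : ‖g‖ ≤ L) (hĝ : ‖ĝ‖ ≤ L) (hG : ‖G‖ ≤ b)
    (hQg : 𝐐 g ∈ closedBall G ε) (hQĝ : 𝐐 ĝ ∈ closedBall G ε)
    (hdesc : ⟪ĝ, g - 𝐐 g⟫_ℝ ≤ -(c * ‖g - 𝐐 g‖))
    (hmin : IsMinOn (‖·‖) (segment ℝ g ĝ) (g + t • (ĝ - g))) :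
    ‖g - 𝐐 g‖ ^ 2 + c * ‖g - 𝐐 g‖ - 2 * ε * (b + ε) ≤ t * (4 * L ^ 2) := by
  set a := ‖g - 𝐐 g‖
  have hinner := K.real_inner_sub_le_of_inner_sub_starProjection_le hG hQg hQĝ hdesc
  rcases ht.2.lt_or_eq with ht1 | rfl
  · have hstep := neg_inner_le_mul_norm_sq_of_isMinOn_segment ⟨ht.1, ht1⟩ hmin
    have hdiff : ‖ĝ - g‖ ^ 2 ≤ 4 * L ^ 2 := by
      have := (norm_sub_le ĝ g).trans (add_le_add hĝ hg)
      nlinarith [norm_nonneg (ĝ - g)]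
    nlinarith [ht.1]
  · -- `c a ≤ -⟪ĝ, g - 𝐐 g⟫ ≤ L a` and `a ≤ ‖g‖ ≤ L`, so the left side is at most `2 L²`
    have hε : 0 ≤ ε := dist_nonneg.trans hQg
    have hb : 0 ≤ b := (norm_nonneg G).trans hG
    have ha : a ≤ L := by
      refine le_trans ?_ hg
      have := K.norm_sq_eq_norm_sq_starProjection_add g
      nlinarith [norm_nonneg g, norm_nonneg (𝐐 g), norm_nonneg (g - 𝐐 g)]
    have hca : c * a ≤ L * a :=
      (le_neg.mp hdesc).trans ((neg_le_abs _).trans ((abs_real_inner_le_norm _ _).trans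
        (mul_le_mul_of_nonneg_right hĝ (norm_nonneg _))))
    nlinarith [norm_nonneg (g - 𝐐 g)]

theorem norm_sub_starProjection_sq_le_of_isMinOn_segment {p : E} {L : ℝ} (hL : 0 < L)
    (hg : ‖g‖ ≤ L) (hĝ : ‖ĝ‖ ≤ L) (hG : ‖G‖ ≤ b)
    (hQg : 𝐐 g ∈ closedBall G ε) (hQĝ : 𝐐 ĝ ∈ closedBall G ε)
    (hdesc : ⟪ĝ, g - 𝐐 g⟫_ℝ ≤ -(c * ‖g - 𝐐 g‖))
    (hη : 2 * ε * (b + ε) ≤ 9 / 64 * (c * ‖g - 𝐐 g‖))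
    (hp : p ∈ segment ℝ g ĝ) (hmin : IsMinOn (‖·‖) (segment ℝ g ĝ) p) :
    ‖p - 𝐐 p‖ ^ 2 ≤ (1 - 3 * c ^ 2 / (64 * L ^ 2)) * ‖g - 𝐐 g‖ ^ 2 := by
  rw [segment_eq_image'] at hp
  obtain ⟨t, ht, rfl⟩ := hp
  set a := ‖g - 𝐐 g‖
  set S := a ^ 2 + c * a - 2 * ε * (b + ε)
  have hdec := K.norm_sub_starProjection_sq_le_sub_mul_of_isMinOn_segment ht hG hQg hQĝ hdesc hmin
  have hstep : S ≤ t * (4 * L ^ 2) := K.le_mul_sq_of_isMinOn_segment ht hg hĝ hG hQg hQĝ hdesc hmin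
  have hη0 : 0 ≤ 2 * ε * (b + ε) := by
    have hε : 0 ≤ ε := dist_nonneg.trans hQg
    have hb : 0 ≤ b := (norm_nonneg G).trans hG
    positivity
  have hS : 55 / 64 * (c * a) ≤ S := by nlinarith [sq_nonneg a]
  -- `S² ≤ 4 L² t S` with `S ≥ 55/64 c a ≥ 0`, and `(55/64)² / 4 ≥ 3/64`
  have hgain : 3 * c ^ 2 / (64 * L ^ 2) * a ^ 2 ≤ t * S := by
    rw [div_mul_eq_mul_div, div_le_iff₀ (by positivity)]
    nlinarith [mul_le_mul_of_nonneg_left hstep (by linarith : 0 ≤ S),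
      mul_self_le_mul_self (by linarith) hS]
  linarith

end Submodule

theorem norm_sub_le_two_mul_of_norm_sub_eq_infDist {E : Type*} [NormedAddCommGroup E]
    {M : Set E} {x₀ x p : E} (hx₀ : x₀ ∈ M) (hp : ‖x - p‖ = infDist x M) :
    ‖p - x₀‖ ≤ 2 * ‖x - x₀‖ := by
  have h := infDist_le_dist_of_mem (x := x) hx₀
  rw [dist_eq_norm, ← hp] at h
  calc ‖p - x₀‖ ≤ ‖p - x‖ + ‖x - x₀‖ := norm_sub_le_norm_sub_add_norm_sub _ _ _
    _ ≤ 2 * ‖x - x₀‖ := by rw [norm_sub_rev]; linarith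

theorem scales_of_max_le {E : Type*} [NormedAddCommGroup E] {M : Set E} {x₀ x p : E}
    {δ σ C : ℝ} (hx₀ : x₀ ∈ M) (hp : ‖x - p‖ = infDist x M) (hx : ‖x - x₀‖ < δ / 2)
    (hσ : 0 < σ) (hC : C ≤ 1 / 8) (hcond : max (infDist x M / σ) σ ≤ C * ‖p - x₀‖) :
    ‖p - x₀‖ < δ ∧ infDist x M ≤ δ ∧ σ < δ / 2 ∧ σ ≤ C * ‖p - x₀‖ ∧
      infDist x M ≤ C * ‖p - x₀‖ * σ ∧ 0 < C := by
  have hpδ : ‖p - x₀‖ < δ :=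
    (norm_sub_le_two_mul_of_norm_sub_eq_infDist hx₀ hp).trans_lt (by linarith)
  have hσC : σ ≤ C * ‖p - x₀‖ := (le_max_right _ _).trans hcond
  refine ⟨hpδ, ?_, ?_, hσC, (div_le_iff₀ hσ).mp ((le_max_left _ _).trans hcond),
    pos_of_mul_pos_left (hσ.trans_le hσC) (norm_nonneg _)⟩
  · linarith [infDist_le_dist_of_mem (x := x) hx₀, dist_eq_norm x x₀, norm_nonneg (x - x₀)]
  · nlinarith [mul_le_mul_of_nonneg_right hC (norm_nonneg (p - x₀))]

theorem real_inner_le_of_aiming {E : Type*} [NormedAddCommGroup E] [InnerProductSpace ℝ E]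
    (Q : E →ₗ[ℝ] E) {P : E → E} {x y g ĝ : E} {τ μ L D e : ℝ}
    (hy : y = x - τ • g) (hτ : 0 < τ) (hμ : 0 ≤ μ) (hĝ : ‖ĝ‖ ≤ L) (hx : ‖x - P x‖ ≤ D)
    (hP : ‖P y - P x - Q (y - x)‖ ≤ e) (haim : μ * ‖y - P y‖ ≤ ⟪ĝ, y - P y⟫_ℝ)
    (herr : (μ + L) * (D + e) ≤ μ / 2 * (τ * ‖g - Q g‖)) :
    ⟪ĝ, g - Q g⟫_ℝ ≤ -(μ / 2 * ‖g - Q g‖) := by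
  set E₀ := P y - P x - Q (y - x)
  have hL : 0 ≤ L := (norm_nonneg _).trans hĝ
  have hsplit : y - P y = (x - P x) - τ • (g - Q g) - E₀ := by
    have hQ : Q (y - x) = -(τ • Q g) := by rw [hy, sub_sub_cancel_left, map_neg, map_smul]
    simp only [E₀, hQ]
    rw [hy]; module
  have hdist : τ * ‖g - Q g‖ ≤ D + e + ‖y - P y‖ := by
    have h : τ • (g - Q g) = (x - P x) - E₀ - (y - P y) := by rw [hsplit]; module
    calc τ * ‖g - Q g‖ = ‖(x - P x) - E₀ - (y - P y)‖ := by
          rw [← h, norm_smul, Real.norm_of_nonneg hτ.le]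
      _ ≤ ‖x - P x‖ + ‖E₀‖ + ‖y - P y‖ :=
          (norm_sub_le _ _).trans (by gcongr; exact norm_sub_le _ _)
      _ ≤ D + e + ‖y - P y‖ := by gcongr
  have hx' : ⟪ĝ, x - P x⟫_ℝ ≤ L * D :=
    (real_inner_le_norm _ _).trans (mul_le_mul hĝ hx (norm_nonneg _) hL)
  have hE₀ : -(L * e) ≤ ⟪ĝ, E₀⟫_ℝ := by
    have := (abs_real_inner_le_norm ĝ E₀).trans (mul_le_mul hĝ hP (norm_nonneg _) hL)
    linarith [neg_abs_le ⟪ĝ, E₀⟫_ℝ]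
  have hinner : ⟪ĝ, y - P y⟫_ℝ = ⟪ĝ, x - P x⟫_ℝ - τ * ⟪ĝ, g - Q g⟫_ℝ - ⟪ĝ, E₀⟫_ℝ := by
    rw [hsplit, inner_sub_right, inner_sub_right, real_inner_smul_right]
  refine le_of_mul_le_mul_left ?_ hτ
  nlinarith [mul_le_mul_of_nonneg_left hdist hμ]

theorem C₅_bounds {δA L μ γ β Ca CM D₂ C₂ C₃ C₄ C₅ : ℝ} (hδA : 0 < δA) (hL : 0 < L) (hμ : 0 < μ)
    (hβ : 0 < β) (hCa : 0 < Ca) (hCM : 0 < CM)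
    (hC₂ : C₂ = min (γ/(8*Ca)) (min 1 (1/δA) / 2))
    (hC₄ : C₄ = min (β/(Ca*(1+δA)))
      (min (min (μ/δA) (C₃*D₂/β) / (4*(1+(1+δA)*CM)*(μ+L))) (1/2)))
    (hC₅ : C₅ = min (β/(2*Ca)) (min (C₃*D₂/(32*Ca*β)) (min C₄ (C₂/4)))) :
    C₅ ≤ 1 / 8 ∧ C₅ * δA ≤ 1 / 8 ∧ 2 * Ca * C₅ ≤ β ∧ 32 * Ca * β * C₅ ≤ C₃ * D₂ ∧
      4 * (1 + (1 + δA) * CM) * (μ + L) * C₅ * δA ≤ μ ∧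
      4 * (1 + (1 + δA) * CM) * (μ + L) * C₅ * β ≤ C₃ * D₂ := by
  have hK : 0 < 4 * (1 + (1 + δA) * CM) * (μ + L) := by positivity
  have hC₅C₄ : C₅ ≤ min (μ/δA) (C₃*D₂/β) / (4*(1+(1+δA)*CM)*(μ+L)) :=
    hC₅ ▸ (min_le_right _ _).trans <| (min_le_right _ _).trans <| (min_le_left _ _).trans <|
      hC₄ ▸ (min_le_right _ _).trans (min_le_left _ _)
  have hC₅C₂ : C₅ ≤ min 1 (1/δA) / 8 := by
    have : C₅ ≤ C₂ / 4 :=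
      hC₅ ▸ (min_le_right _ _).trans <| (min_le_right _ _).trans (min_le_right _ _)
    have : C₂ ≤ min 1 (1/δA) / 2 := hC₂ ▸ min_le_right _ _
    linarith
  rw [le_div_iff₀ hK] at hC₅C₄
  refine ⟨?_, ?_, ?_, ?_, ?_, ?_⟩
  · linarith [min_le_left (1 : ℝ) (1/δA)]
  · calc C₅ * δA ≤ 1 / δA / 8 * δA := by
          gcongr; exact hC₅C₂.trans (by gcongr; exact min_le_right _ _)
      _ = 1 / 8 := by field_simp
  · have := hC₅ ▸ min_le_left (β/(2*Ca)) _
    rw [le_div_iff₀ (by positivity)] at this; linarith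
  · have := hC₅ ▸ (min_le_right (β/(2*Ca)) _).trans (min_le_left _ _)
    rw [le_div_iff₀ (by positivity)] at this; linarith
  · have := hC₅C₄.trans (min_le_left _ _)
    rw [le_div_iff₀ hδA] at this; linarith
  · have := hC₅C₄.trans (min_le_right _ _)
    rw [le_div_iff₀ hβ] at this; linarith

-- In the two scalar bounds below `r = ‖P x - x̄‖`, `D = dist(x, M)`, `a = ‖N g‖` and `s = ‖g‖`.
theorem goldstein_error_bounds {Ca β C₃ D₂ C₅ r σ D a : ℝ} (hCa : 0 ≤ Ca) (hD₂ : 0 ≤ D₂)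
    (hr : 0 ≤ r) (hD : 0 ≤ D) (hσ : 0 ≤ σ) (hσr : σ ≤ C₅ * r) (hDr : D ≤ C₅ * r * σ)
    (hC₅r : C₅ * r ≤ 1 / 8)
    (hCaC₅ : 2 * Ca * C₅ ≤ β) (hCaβC₅ : 32 * Ca * β * C₅ ≤ C₃ * D₂) (ha : C₃ * r ^ 2 ≤ a) :
    Ca * (D + σ) ≤ β * r ∧ 2 * (Ca * (D + σ)) * (β * r + Ca * (D + σ)) ≤ 9 / 64 * (D₂ * a) := by
  have hD8 : D ≤ 1 / 8 * (C₅ * r) := by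
    have := mul_le_mul_of_nonneg_left hσr (hσ.trans hσr)
    nlinarith
  have hε : Ca * (D + σ) ≤ 9 / 8 * (Ca * C₅ * r) := by nlinarith
  have hεβ : Ca * (D + σ) ≤ β * r := by nlinarith
  refine ⟨hεβ, ?_⟩
  have hε0 : 0 ≤ Ca * (D + σ) := by positivity
  calc 2 * (Ca * (D + σ)) * (β * r + Ca * (D + σ))
      ≤ 2 * (Ca * (D + σ)) * (2 * (β * r)) := by gcongr; linarith
    _ ≤ 2 * (9 / 8 * (Ca * C₅ * r)) * (2 * (β * r)) := by gcongr; linarith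
    _ = 9 / 64 * (32 * Ca * β * C₅) * r ^ 2 := by ring
    _ ≤ 9 / 64 * (C₃ * D₂) * r ^ 2 := by gcongr
    _ ≤ 9 / 64 * (D₂ * a) := by nlinarith

theorem aiming_error_bound {δA μ L β CM C₃ D₂ C₅ r σ D a s : ℝ} (hμ : 0 ≤ μ) (hL : 0 ≤ L)
    (hCM : 0 ≤ CM) (hC₅ : 0 ≤ C₅) (hr : 0 ≤ r) (hD : 0 ≤ D) (hσ : 0 ≤ σ) (hs : 0 < s)
    (ha0 : 0 ≤ a) (hσr : σ ≤ C₅ * r) (hDr : D ≤ C₅ * r * σ) (hDδ : D ≤ δA) (hrδ : r ≤ δA)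
    (hsa : s ≤ 2 * β * r + a) (hK₀δ : 4 * (1 + (1 + δA) * CM) * (μ + L) * C₅ * δA ≤ μ)
    (hK₀β : 4 * (1 + (1 + δA) * CM) * (μ + L) * C₅ * β ≤ C₃ * D₂) (ha : C₃ * r ^ 2 ≤ a)
    (hD₂ : D₂ = μ / 2) :
    (μ + L) * (D + CM * (D ^ 2 + σ ^ 2)) ≤ μ / 2 * (σ / s * a) := by
  rw [← hD₂, div_mul_eq_mul_div, mul_div_assoc', le_div_iff₀ hs]
  set K₀ := 1 + (1 + δA) * CM
  have hK₀ : 0 ≤ K₀ := by have := hr.trans hrδ; positivity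
  have herr : D + CM * (D ^ 2 + σ ^ 2) ≤ K₀ * (C₅ * r) * σ := by
    have hD2 : D ^ 2 ≤ C₅ * r * σ * δA := by
      rw [sq]; exact mul_le_mul hDr hDδ hD (by positivity)
    have hσ2 : σ ^ 2 ≤ C₅ * r * σ := by
      rw [sq]; exact mul_le_mul_of_nonneg_right hσr hσ
    have := mul_le_mul_of_nonneg_left (add_le_add hD2 hσ2) hCM
    simp only [K₀]; nlinarith
  have hstep : (μ + L) * K₀ * (C₅ * r) * (2 * β * r + a) ≤ D₂ * a := by
    have h₁ : (μ + L) * K₀ * (C₅ * r) * (2 * β * r) ≤ D₂ * a / 2 := by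
      have := mul_le_mul_of_nonneg_right hK₀β (sq_nonneg r)
      nlinarith
    have h₂ : (μ + L) * K₀ * (C₅ * r) * a ≤ D₂ * a / 2 := by
      have h := mul_le_mul_of_nonneg_left hrδ (by positivity : 0 ≤ 4 * K₀ * (μ + L) * C₅)
      have := mul_le_mul_of_nonneg_right (h.trans hK₀δ) ha0
      nlinarith
    linarith
  calc (μ + L) * (D + CM * (D ^ 2 + σ ^ 2)) * s
      ≤ (μ + L) * (K₀ * (C₅ * r) * σ) * (2 * β * r + a) := by gcongr
    _ = (μ + L) * K₀ * (C₅ * r) * (2 * β * r + a) * σ := by ring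
    _ ≤ D₂ * a * σ := by gcongr
    _ = D₂ * (σ * a) := by ring

theorem stmt7_general {d : ℕ}
    (f : Euc d → ℝ)
    (xbar : Euc d) (M : Set (Euc d)) (hxbarM : xbar ∈ M)
    (δA L μ γ β Ca CM : ℝ)
    (hδA : 0 < δA) (hL : 0 < L) (hμ : 0 < μ) (hβ : 0 < β)
    (hCa : 0 < Ca) (hCM : 0 < CM)
    (P : Euc d → Euc d)
    (hP : ∀ z ∈ ball xbar (2*δA), P z ∈ M ∧ ‖z - P z‖ = Metric.infDist z M)
    (Tsp : Euc d → Submodule ℝ (Euc d)) (Q : Euc d → Euc d → Euc d)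
    (hQ : ∀ x ∈ ball xbar δA, ∀ v, Q x v = ((Tsp x).orthogonalProjectionOnto v : Euc d))
    (G : Euc d → Euc d)
    (hG : ∀ x ∈ ball xbar δA, G x ∈ Tsp x)
    (H1 : ∀ x' ∈ ball xbar (2*δA), ∀ v ∈ clarkeSubdiff f x', ‖v‖ ≤ L)
    (H2 : ∀ x' ∈ ball xbar δA, ∀ v ∈ clarkeSubdiff f x',
      μ * Metric.infDist x' M ≤ ⟪ v, x' - P x' ⟫_ℝ)
    (H3 : ∀ x ∈ ball xbar δA, ∀ x' ∈ ball xbar (2*δA),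
      ‖P x' - P x - Q x (x' - x)‖ ≤ CM * (Metric.infDist x M ^ 2 + ‖x - x'‖ ^ 2))
    (H4 : ∀ x ∈ ball xbar δA, ∀ σ ∈ Icc (0:ℝ) δA, ∀ g ∈ goldsteinSubdiff f σ x,
      ‖Q x (g - G x)‖ ≤ Ca * (Metric.infDist x M + σ))
    (H5 : ∀ x ∈ ball xbar δA, γ/2 * ‖P x - xbar‖ ≤ ‖G x‖ ∧ ‖G x‖ ≤ β * ‖P x - xbar‖)
    (D₂ C₂ C₃ C₄ C₅ : ℝ)
    (hD₂ : D₂ = μ/2)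
    (hC₂ : C₂ = min (γ/(8*Ca)) (min 1 (1/δA) / 2))
    (hC₄ : C₄ = min (β/(Ca*(1+δA)))
      (min (min (μ/δA) (C₃*D₂/β) / (4*(1+(1+δA)*CM)*(μ+L))) (1/2)))
    (hC₅ : C₅ = min (β/(2*Ca)) (min (C₃*D₂/(32*Ca*β)) (min C₄ (C₂/4))))
    (x : Euc d) (hx : x ∈ ball xbar (δA/2)) (σ : ℝ) (hσ : 0 < σ)
    (g : Euc d) (hg : g ∈ goldsteinSubdiff f σ x) (hgne : g ≠ 0)
    (ghat : Euc d) (hghat : ghat ∈ clarkeSubdiff f (x - (σ/‖g‖) • g))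
    (hlow : C₃ * ‖P x - xbar‖^2 ≤ ‖g - Q x g‖)
    (hcond : max (Metric.infDist x M / σ) σ ≤ C₅ * ‖P x - xbar‖)
    (g' : Euc d) (hg'seg : g' ∈ segment ℝ g ghat)
    (hg'min : ∀ h ∈ segment ℝ g ghat, ‖g'‖ ≤ ‖h‖) :
    ‖g' - Q x g'‖^2 ≤ (1 - 3*D₂^2/(64*L^2)) * ‖g - Q x g‖^2 := by
  have hxA : x ∈ ball xbar δA := ball_subset_ball (by linarith) hx
  have hQx : Q x = (Tsp x).starProjection := funext (hQ x hxA)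
  rw [hQx] at hlow ⊢
  obtain ⟨hC₅8, hC₅δ, hCaC₅, hCaβC₅, hK₀δ, hK₀β⟩ := C₅_bounds hδA hL hμ hβ hCa hCM hC₂ hC₄ hC₅
  have hPx := (hP x (ball_subset_ball (by linarith) hx)).2
  obtain ⟨hrδ, hDδ, hσδ, hσr, hDr, hC₅⟩ :=
    scales_of_max_le hxbarM hPx (mem_ball_iff_norm.mp hx) hσ hC₅8 hcond
  have hball : closedBall x σ ⊆ ball xbar δA :=
    closedBall_subset_ball' (by linarith [mem_ball.mp hx])
  have hball₂ : closedBall x σ ⊆ ball xbar (2 * δA) := hball.trans (ball_subset_ball (by linarith))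
  have hxy : ‖x - (x - (σ / ‖g‖) • g)‖ = σ := by
    rw [sub_sub_cancel, norm_smul, Real.norm_of_nonneg (by positivity),
      div_mul_cancel₀ _ (norm_ne_zero_iff.mpr hgne)]
  have hy : x - (σ / ‖g‖) • g ∈ closedBall x σ := mem_closedBall_iff_norm'.mpr hxy.le
  have hgL : ‖g‖ ≤ L := mem_closedBall_zero_iff.mp <|
    goldsteinSubdiff_subset_closedBall (fun z hz => H1 z (hball₂ hz)) hg
  have hĝσ := clarkeSubdiff_subset_goldsteinSubdiff hy hghat
  have hnear : ∀ v ∈ goldsteinSubdiff f σ x,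
      (Tsp x).starProjection v ∈ closedBall (G x) (Ca * (infDist x M + σ)) := fun v hv =>
    (Tsp x).starProjection_mem_closedBall (hG x hxA) (hQx ▸ H4 x hxA σ ⟨hσ.le, by linarith⟩ v hv)
  obtain ⟨hεβ, hη⟩ := goldstein_error_bounds hCa.le (by rw [hD₂]; positivity) (norm_nonneg _)
    infDist_nonneg hσ.le hσr hDr (by nlinarith) hCaC₅ hCaβC₅ hlow
  have hga : ‖g‖ ≤ 2 * β * ‖P x - xbar‖ + ‖g - (Tsp x).starProjection g‖ := by
    have := norm_le_norm_add_norm_sub' g ((Tsp x).starProjection g)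
    have := norm_le_norm_add_norm_sub' ((Tsp x).starProjection g) (G x)
    linarith [mem_closedBall_iff_norm.mp (hnear g hg), (H5 x hxA).2]
  have hĝL := H1 _ (hball₂ hy) ghat hghat
  have hexp := H3 x hxA _ (hball₂ hy)
  rw [hQx, hxy] at hexp
  have haim := H2 _ (hball hy) ghat hghat
  rw [← (hP _ (hball₂ hy)).2] at haim
  have hdesc := real_inner_le_of_aiming (Tsp x).starProjection.toLinearMap rfl (by positivity)
    hμ.le hĝL hPx.le hexp haim
    (aiming_error_bound hμ.le hL.le hCM.le hC₅.le (norm_nonneg _) infDist_nonneg hσ.le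
      (norm_pos_iff.mpr hgne) (norm_nonneg _) hσr hDr hDδ hrδ.le hga hK₀δ hK₀β hlow hD₂)
  rw [ContinuousLinearMap.coe_coe, ← hD₂] at hdesc
  exact (Tsp x).norm_sub_starProjection_sq_le_of_isMinOn_segment hL hgL hĝL
    (H5 x hxA).2 (hnear g hg) (hnear ghat hĝσ) hdesc hη hg'seg (isMinOn_iff.mpr hg'min)

theorem stmt7 {d : ℕ}
    (f : Euc d → ℝ) (hf : LocallyLipschitz f)
    (xbar : Euc d) (M : Set (Euc d)) (hxbarM : xbar ∈ M)
    (δA L μ γ β Ca CM : ℝ)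
    (hδA : 0 < δA) (hL : 0 < L) (hμ : 0 < μ) (hγ : 0 < γ) (hβ : 0 < β)
    (hCa : 0 < Ca) (hCM : 0 < CM)
    (P : Euc d → Euc d)
    (hP : ∀ z ∈ ball xbar (2*δA), P z ∈ M ∧ ‖z - P z‖ = Metric.infDist z M)
    (Tsp : Euc d → Submodule ℝ (Euc d)) (Q : Euc d → Euc d → Euc d)
    (hQ : ∀ x ∈ ball xbar δA, ∀ v, Q x v = ((Tsp x).orthogonalProjectionOnto v : Euc d))
    (G : Euc d → Euc d)
    (hG : ∀ x ∈ ball xbar δA, G x ∈ Tsp x)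
    (H1 : ∀ x' ∈ ball xbar (2*δA), ∀ v ∈ clarkeSubdiff f x', ‖v‖ ≤ L)
    (H2 : ∀ x' ∈ ball xbar δA, ∀ v ∈ clarkeSubdiff f x',
      μ * Metric.infDist x' M ≤ ⟪ v, x' - P x' ⟫_ℝ)
    (H3 : ∀ x ∈ ball xbar δA, ∀ x' ∈ ball xbar (2*δA),
      ‖P x' - P x - Q x (x' - x)‖ ≤ CM * (Metric.infDist x M ^ 2 + ‖x - x'‖ ^ 2))
    (H4 : ∀ x ∈ ball xbar δA, ∀ σ ∈ Icc (0:ℝ) δA, ∀ g ∈ goldsteinSubdiff f σ x,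
      ‖Q x (g - G x)‖ ≤ Ca * (Metric.infDist x M + σ))
    (H5 : ∀ x ∈ ball xbar δA, γ/2 * ‖P x - xbar‖ ≤ ‖G x‖ ∧ ‖G x‖ ≤ β * ‖P x - xbar‖)
    (D₂ C₁ C₂ C₃ C₄ C₅ : ℝ)
    (hD₂ : D₂ = μ/2)
    (hC₁ : C₁ = γ/4)
    (hC₂ : C₂ = min (γ/(8*Ca)) (min 1 (1/δA) / 2))
    (hC₃ : C₃ = C₁^2/(8*L))
    (hC₄ : C₄ = min (β/(Ca*(1+δA)))
      (min (min (μ/δA) (C₃*D₂/β) / (4*(1+(1+δA)*CM)*(μ+L))) (1/2)))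
    (hC₅ : C₅ = min (β/(2*Ca)) (min (C₃*D₂/(32*Ca*β)) (min C₄ (C₂/4))))
    (x : Euc d) (hx : x ∈ ball xbar (δA/2)) (σ : ℝ) (hσ : 0 < σ)
    (g : Euc d) (hg : g ∈ goldsteinSubdiff f σ x) (hgne : g ≠ 0)
    (ghat : Euc d) (hghat : ghat ∈ clarkeSubdiff f (x - (σ/‖g‖) • g)) (hghatne : ghat ≠ 0)
    (hlow : C₃ * ‖P x - xbar‖^2 ≤ ‖g - Q x g‖)
    (hcond : max (Metric.infDist x M / σ) σ ≤ C₅ * ‖P x - xbar‖)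
    (g' : Euc d) (hg'seg : g' ∈ segment ℝ g ghat)
    (hg'min : ∀ h ∈ segment ℝ g ghat, ‖g'‖ ≤ ‖h‖) :
    ‖g' - Q x g'‖^2 ≤ (1 - 3*D₂^2/(64*L^2)) * ‖g - Q x g‖^2 :=
  stmt7_general f xbar M hxbarM δA L μ γ β Ca CM hδA hL hμ hβ hCa hCM P hP Tsp Q hQ G hG H1 H2 H3 H4
    H5 D₂ C₂ C₃ C₄ C₅ hD₂ hC₂ hC₄ hC₅ x hx σ hσ g hg hgne ghat hghat hlow hcond g' hg'seg hg'min
end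

section
/- Let f : ℝ^d → ℝ be a convex function, let x, y ∈ ℝ^d, let σ > 0, and let L ≥ 0 be such that f is L-Lipschitz on the ball ball(x, 2σ). Then every w ∈ ∂_σ f(x) satisfies f(x) − f(y) ≤ ‖x − y‖·‖w‖ + 2σL. -/
open Metric Set Filter
open scoped InnerProductSpace

def convexSubdiff {d : ℕ} (f : Euc d → ℝ) (x : Euc d) : Set (Euc d) :=
  {v | ∀ z, f x + ⟪ v, z - x ⟫_ℝ ≤ f z}

noncomputable def goldsteinConvexSubdiff {d : ℕ} (f : Euc d → ℝ) (σ : ℝ) (x : Euc d) :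
    Set (Euc d) :=
  convexHull ℝ (⋃ y ∈ closedBall x σ, convexSubdiff f y)

theorem stmt11 {d : ℕ} (f : Euc d → ℝ) (hconv : ConvexOn ℝ Set.univ f)
    (x y : Euc d) (σ L : ℝ) (hσ : 0 < σ) (hL : 0 ≤ L)
    (hLip : ∀ a ∈ ball x (2*σ), ∀ b ∈ ball x (2*σ), |f a - f b| ≤ L * ‖a - b‖)
    (w : Euc d) (hw : w ∈ goldsteinConvexSubdiff f σ x) :
    f x - f y ≤ ‖x - y‖ * ‖w‖ + 2*σ*L := by
  set S : Set (Euc d) := {v | f x - f y - 2*σ*L ≤ ⟪v, x - y⟫_ℝ} with hS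
  have hSconv : Convex ℝ S := by
    refine convex_halfSpace_ge ?_ (f x - f y - 2*σ*L)
    exact ⟨fun a b => inner_add_left a b _, fun c a => real_inner_smul_left a _ c⟩
  have hxball : x ∈ ball x (2*σ) := mem_ball_self (by linarith)
  have key : (⋃ y' ∈ closedBall x σ, convexSubdiff f y') ⊆ S := by
    rintro v hv
    simp only [mem_iUnion] at hv
    obtain ⟨y', hy', hv⟩ := hv
    have hy'x : ‖y' - x‖ ≤ σ := by
      rw [← dist_eq_norm]; exact mem_closedBall.mp hy'
    have hy'ball : y' ∈ ball x (2*σ) := by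
      rw [mem_ball, dist_eq_norm]; linarith
    -- ‖v‖ ≤ L
    have hvL : ‖v‖ ≤ L := by
      rcases eq_or_ne v 0 with h0 | h0
      · simp [h0]; exact hL
      · have hvpos : (0:ℝ) < ‖v‖ := norm_pos_iff.mpr h0
        set c := (σ/2)/‖v‖ with hc
        have hcpos : 0 < c := div_pos (by linarith) hvpos
        set z := y' + c • v with hzdef
        have hzy' : z - y' = c • v := by rw [hzdef]; abel
        have hzy'n : ‖z - y'‖ = σ/2 := by
          rw [hzy', norm_smul, Real.norm_eq_abs, abs_of_pos hcpos, hc]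
          field_simp
        have hzball : z ∈ ball x (2*σ) := by
          rw [mem_ball, dist_eq_norm]
          calc ‖z - x‖ = ‖(z - y') + (y' - x)‖ := by congr 1; abel
            _ ≤ ‖z - y'‖ + ‖y' - x‖ := norm_add_le _ _
            _ ≤ σ/2 + σ := by rw [hzy'n]; linarith
            _ < 2*σ := by linarith
        have h1 := hv z
        have h2 := hLip z hzball y' hy'ball
        have hinner : ⟪v, z - y'⟫_ℝ = c * ‖v‖^2 := by
          rw [hzy', real_inner_smul_right, real_inner_self_eq_norm_sq]
        have h3 : c * ‖v‖^2 ≤ L * (σ/2) := by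
          rw [hzy'n] at h2
          have := abs_le.mp h2
          linarith [hinner ▸ h1]
        have h4 : c * ‖v‖^2 = (σ/2) * ‖v‖ := by
          rw [hc]; field_simp
        rw [h4] at h3
        have h5 : (σ/2) * ‖v‖ ≤ (σ/2) * L := by linarith
        exact le_of_mul_le_mul_left h5 (by linarith)
    -- |f x - f y'| ≤ L * σ
    have hfxy' : |f x - f y'| ≤ L * σ := by
      calc |f x - f y'| ≤ L * ‖x - y'‖ := hLip x hxball y' hy'ball
        _ ≤ L * σ := by
          have : ‖x - y'‖ = ‖y' - x‖ := norm_sub_rev _ _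
          rw [this]; exact mul_le_mul_of_nonneg_left hy'x hL
    -- f y' - f y ≤ ⟪v, y' - y⟫
    have hsub : f y' - f y ≤ ⟪v, y' - y⟫_ℝ := by
      have := hv y
      have h : ⟪v, y' - y⟫_ℝ = - ⟪v, y - y'⟫_ℝ := by
        rw [← inner_neg_right]; congr 1; abel
      rw [h]; linarith
    -- split inner product
    have hsplit : ⟪v, y' - y⟫_ℝ = ⟪v, x - y⟫_ℝ + ⟪v, y' - x⟫_ℝ := by
      rw [← inner_add_right]; congr 1; abel
    have hcs : ⟪v, y' - x⟫_ℝ ≤ L * σ := by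
      calc ⟪v, y' - x⟫_ℝ ≤ ‖v‖ * ‖y' - x‖ := real_inner_le_norm _ _
        _ ≤ L * σ := mul_le_mul hvL hy'x (norm_nonneg _) hL
    have habs := abs_le.mp hfxy'
    show f x - f y - 2*σ*L ≤ ⟪v, x - y⟫_ℝ
    linarith
  have hwS : w ∈ S := convexHull_min key hSconv hw
  have hcs : ⟪w, x - y⟫_ℝ ≤ ‖w‖ * ‖x - y‖ := real_inner_le_norm _ _
  have := hwS
  rw [hS] at this
  simp only [mem_setOf_eq] at this
  nlinarith [norm_nonneg w, norm_nonneg (x - y)]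
end

section
/- Let f : ℝ^d → ℝ be convex, let x̄ ∈ ℝ^d, and let γ, δ > 0 satisfy f(x) − f(x̄) ≥ (γ/2)·‖x − x̄‖² for every x ∈ closedBall(x̄, δ). Then for every a > 0, the sublevel set {x ∈ ℝ^d : f(x) − f(x̄) ≤ a} is contained in closedBall(x̄, max{2a/(γδ), √(2a/γ)}). -/
open Metric Set Filter
open scoped InnerProductSpace

theorem stmt13 {d : ℕ} (f : Euc d → ℝ) (hconv : ConvexOn ℝ Set.univ f)
    (xbar : Euc d) (γ δ : ℝ) (hγ : 0 < γ) (hδ : 0 < δ)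
    (hquad : ∀ x ∈ closedBall xbar δ, γ/2 * ‖x - xbar‖^2 ≤ f x - f xbar)
    (a : ℝ) (ha : 0 < a) :
    {x : Euc d | f x - f xbar ≤ a} ⊆
      closedBall xbar (max (2*a/(γ*δ)) (Real.sqrt (2*a/γ))) := by
  intro x hx
  simp only [Set.mem_setOf_eq] at hx
  rw [mem_closedBall, dist_eq_norm]
  set r := ‖x - xbar‖ with hr
  rcases le_or_gt r δ with h | h
  · refine le_trans ?_ (le_max_right _ _)
    have hq := hquad x (by rw [mem_closedBall, dist_eq_norm]; exact h)
    have hle : r^2 ≤ 2*a/γ := by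
      rw [le_div_iff₀ hγ]; nlinarith
    calc r = Real.sqrt (r^2) := (Real.sqrt_sq (norm_nonneg _)).symm
      _ ≤ Real.sqrt (2*a/γ) := Real.sqrt_le_sqrt hle
  · refine le_trans ?_ (le_max_left _ _)
    have hr0 : 0 < r := hδ.trans h
    set t := δ / r with ht
    have ht0 : 0 < t := div_pos hδ hr0
    have ht1 : t < 1 := (div_lt_one hr0).mpr h
    set y := (1 - t) • xbar + t • x with hy
    have hyb : ‖y - xbar‖ = δ := by
      have hyx : y - xbar = t • (x - xbar) := by rw [hy]; module
      rw [hyx, norm_smul, Real.norm_eq_abs, abs_of_pos ht0, ← hr, ht]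
      field_simp
    have hconvy : f y ≤ (1 - t) * f xbar + t * f x :=
      hconv.2 (mem_univ xbar) (mem_univ x) (by linarith) ht0.le (by ring)
    have hq := hquad y (by rw [mem_closedBall, dist_eq_norm, hyb])
    rw [hyb] at hq
    have h1 : γ/2 * δ^2 ≤ t * a := by nlinarith [mul_le_mul_of_nonneg_left hx ht0.le]
    rw [ht] at h1
    rw [show δ / r * a = δ * a / r by ring, le_div_iff₀ hr0] at h1
    rw [le_div_iff₀ (by positivity)]
    nlinarith
end

section
/- Let g : ℝ^d → ℝ be twice continuously differentiable on ball(x̄, δ) for some x̄ ∈ ℝ^d and δ > 0, with ∇g(x̄) = 0, and suppose the Hessian x ↦ ∇²g(x) is ρ-Lipschitz with respect to the operator norm on ball(x̄, δ), where ρ > 0. Let S ⊆ ℝ^d contain x̄ and let γ > 0 satisfy g(y) − g(x̄) ≥ (γ/2)·‖y − x̄‖² for every y ∈ S ∩ ball(x̄, δ). Then for every y ∈ S ∩ ball(x̄, min{δ, 9γ/(16ρ)}) one has g(x̄) ≥ g(y) + ⟨∇g(y), x̄ − y⟩, and consequently ‖∇g(y)‖ ≥ (γ/2)·‖y − x̄‖.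 -/
open Metric Set Filter
open scoped InnerProductSpace

/-!
Write `u = y - x̄` and `H = ∇²g(x̄)`. Integrating the Lipschitz bound on the Hessian along the
segment `[x̄, y]` gives `‖∇g(y) - H u‖ ≤ (ρ/2)‖u‖²` and `|g(y) - g(x̄) - ⟪H u, u⟫/2| ≤ (ρ/6)‖u‖³`.
Eliminating `⟪H u, u⟫` and using quadratic growth,
`⟪∇g(y), u⟫ - (g(y) - g(x̄)) ≥ (g(y) - g(x̄)) - (5ρ/6)‖u‖³ ≥ ‖u‖²(γ/2 - (5ρ/6)‖u‖)`,
which is nonnegative as soon as `‖u‖ ≤ 3γ/(5ρ)`, in particular for `‖u‖ < 9γ/(16ρ)`.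
The gradient bound then follows by Cauchy–Schwarz.
-/

theorem norm_image_one_le_of_norm_deriv_le_pow {F : Type*} [NormedAddCommGroup F]
    [NormedSpace ℝ F] {φ φ' : ℝ → F} {C : ℝ} (k : ℕ)
    (hφ : ∀ t ∈ Icc (0 : ℝ) 1, HasDerivAt φ (φ' t) t) (h0 : φ 0 = 0)
    (bound : ∀ t ∈ Ico (0 : ℝ) 1, ‖φ' t‖ ≤ C * t ^ k) :
    ‖φ 1‖ ≤ C / (k + 1) := by
  have hB : ∀ t, HasDerivAt (fun t => C / (k + 1) * t ^ (k + 1)) (C * t ^ k) t := by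
    intro t
    refine ((hasDerivAt_pow (k + 1) t).const_mul (C / (k + 1))).congr_deriv ?_
    rw [Nat.add_sub_cancel]
    push_cast
    field_simp
  simpa using image_norm_le_of_norm_deriv_right_le_deriv_boundary
    (fun t ht => (hφ t ht).continuousAt.continuousWithinAt)
    (fun t ht => (hφ t (Ico_subset_Icc_self ht)).hasDerivWithinAt)
    (by simp [h0]) hB bound (right_mem_Icc.2 zero_le_one)

section Taylor

variable {E : Type*} [NormedAddCommGroup E]

theorem HasFDerivAt.comp_add_smul {F : Type*} [NormedSpace ℝ E] [NormedAddCommGroup F]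
    [NormedSpace ℝ F] {f : E → F} {f' : E →L[ℝ] F} {x u : E} {t : ℝ}
    (hf : HasFDerivAt f f' (x + t • u)) :
    HasDerivAt (fun s : ℝ => f (x + s • u)) (f' u) t := by
  have hline : HasDerivAt (fun s : ℝ => x + s • u) u t := by
    simpa using ((hasDerivAt_id t).smul_const u).const_add x
  exact hf.comp_hasDerivAt t hline

theorem Convex.norm_image_sub_sub_fderiv_le {F : Type*} [NormedSpace ℝ E] [NormedAddCommGroup F]
    [NormedSpace ℝ F] {f : E → F} {f' : E → E →L[ℝ] F} {s : Set E} {ρ : ℝ}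
    (hs : Convex ℝ s) (hf : ∀ z ∈ s, HasFDerivAt f (f' z) z)
    (hf' : ∀ a ∈ s, ∀ b ∈ s, ‖f' a - f' b‖ ≤ ρ * ‖a - b‖) {x y : E} (hx : x ∈ s) (hy : y ∈ s) :
    ‖f y - f x - f' x (y - x)‖ ≤ ρ / 2 * ‖y - x‖ ^ 2 := by
  set u := y - x
  have hseg : ∀ t ∈ Icc (0 : ℝ) 1, x + t • u ∈ s := fun t ht => hs.add_smul_sub_mem hx hy ht
  have hφ : ∀ t ∈ Icc (0 : ℝ) 1, HasDerivAt (fun t => f (x + t • u) - f x - t • f' x u)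
      (f' (x + t • u) u - f' x u) t := fun t ht =>
    (((hf _ (hseg t ht)).comp_add_smul).sub_const (f x)).sub
      (by simpa using (hasDerivAt_id t).smul_const (f' x u))
  have bound : ∀ t ∈ Ico (0 : ℝ) 1, ‖f' (x + t • u) u - f' x u‖ ≤ ρ * ‖u‖ ^ 2 * t ^ 1 := by
    intro t ht
    calc ‖f' (x + t • u) u - f' x u‖ = ‖(f' (x + t • u) - f' x) u‖ := rfl
      _ ≤ ‖f' (x + t • u) - f' x‖ * ‖u‖ := ContinuousLinearMap.le_opNorm _ _
      _ ≤ ρ * ‖x + t • u - x‖ * ‖u‖ := by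
        gcongr
        exact hf' _ (hseg t (Ico_subset_Icc_self ht)) _ hx
      _ = ρ * ‖u‖ ^ 2 * t ^ 1 := by
        rw [add_sub_cancel_left, norm_smul, Real.norm_of_nonneg ht.1]
        ring
  have := norm_image_one_le_of_norm_deriv_le_pow 1 hφ (by simp) bound
  rw [one_smul, add_sub_cancel] at this
  convert this using 1
  norm_num
  ring

variable [InnerProductSpace ℝ E] [CompleteSpace E]

theorem Convex.abs_image_sub_sub_inner_gradient_le {g : E → ℝ} {G : E → E} {H : E →L[ℝ] E}
    {s : Set E} {K : ℝ} {x y : E} (hs : Convex ℝ s) (hg : ∀ z ∈ s, HasGradientAt g (G z) z)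
    (hG : ∀ z ∈ s, ‖G z - G x - H (z - x)‖ ≤ K * ‖z - x‖ ^ 2) (hx : x ∈ s) (hy : y ∈ s) :
    |g y - g x - ⟪G x, y - x⟫_ℝ - ⟪H (y - x), y - x⟫_ℝ / 2| ≤ K / 3 * ‖y - x‖ ^ 3 := by
  set u := y - x
  have hseg : ∀ t ∈ Icc (0 : ℝ) 1, x + t • u ∈ s := fun t ht => hs.add_smul_sub_mem hx hy ht
  have hφ : ∀ t ∈ Icc (0 : ℝ) 1,
      HasDerivAt (fun t => g (x + t • u) - g x - t * ⟪G x, u⟫_ℝ - t ^ 2 / 2 * ⟪H u, u⟫_ℝ)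
        ⟪G (x + t • u) - G x - H (t • u), u⟫_ℝ t := by
    intro t ht
    have hline := (hg _ (hseg t ht)).hasFDerivAt.comp_add_smul
    have hquad : HasDerivAt (fun t : ℝ => t ^ 2 / 2 * ⟪H u, u⟫_ℝ) (t * ⟪H u, u⟫_ℝ) t := by
      refine (((hasDerivAt_pow 2 t).div_const 2).mul_const ⟪H u, u⟫_ℝ).congr_deriv ?_
      norm_num
    refine (((hline.sub_const (g x)).sub ((hasDerivAt_id' t).mul_const ⟪G x, u⟫_ℝ)).sub
      hquad).congr_deriv ?_
    simp [inner_sub_left, real_inner_smul_left]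
  have bound : ∀ t ∈ Ico (0 : ℝ) 1,
      ‖⟪G (x + t • u) - G x - H (t • u), u⟫_ℝ‖ ≤ K * ‖u‖ ^ 3 * t ^ 2 := by
    intro t ht
    calc ‖⟪G (x + t • u) - G x - H (t • u), u⟫_ℝ‖
        ≤ ‖G (x + t • u) - G x - H (t • u)‖ * ‖u‖ := norm_inner_le_norm _ _
      _ ≤ K * ‖t • u‖ ^ 2 * ‖u‖ := by
        gcongr
        simpa using hG _ (hseg t (Ico_subset_Icc_self ht))
      _ = K * ‖u‖ ^ 3 * t ^ 2 := by
        rw [norm_smul, Real.norm_of_nonneg ht.1]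
        ring
  have := norm_image_one_le_of_norm_deriv_le_pow 2 hφ (by simp) bound
  rw [one_smul, add_sub_cancel, Real.norm_eq_abs] at this
  convert this using 2
  · ring
  · norm_num
    ring

theorem ContDiffOn.differentiableOn_gradient {g : E → ℝ} {U : Set E}
    (hg : ContDiffOn ℝ 2 g U) (hU : IsOpen U) : DifferentiableOn ℝ (gradient g) U :=
  (InnerProductSpace.toDual ℝ E).symm.toContinuousLinearEquiv.differentiable.comp_differentiableOn
    ((hg.fderiv_of_isOpen (m := 1) hU (by norm_num)).differentiableOn one_ne_zero)

end Taylor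

theorem le_of_abs_sub_le_of_quadratic_growth {Δ A c n K γ : ℝ}
    (hsmall : 10 * K * n ≤ 3 * γ) (hgrowth : γ / 2 * n ^ 2 ≤ Δ)
    (hΔ : |Δ - c / 2| ≤ K / 3 * n ^ 3) (hA : |A - c| ≤ K * n ^ 3) : Δ ≤ A := by
  obtain ⟨-, hΔ⟩ := abs_le.1 hΔ
  obtain ⟨hA, -⟩ := abs_le.1 hA
  nlinarith [mul_nonneg (sq_nonneg n) (sub_nonneg.2 hsmall)]

theorem stmt14_general {d : ℕ} (g : Euc d → ℝ) (xbar : Euc d) (δ ρ γ : ℝ) (hρ : 0 < ρ)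
    (hg : ContDiffOn ℝ 2 g (ball xbar δ))
    (hgrad0 : gradient g xbar = 0)
    (hHess : ∀ a ∈ ball xbar δ, ∀ b ∈ ball xbar δ,
      ‖fderiv ℝ (gradient g) a - fderiv ℝ (gradient g) b‖ ≤ ρ * ‖a - b‖)
    (S : Set (Euc d))
    (hquad : ∀ y ∈ S ∩ ball xbar δ, γ/2 * ‖y - xbar‖^2 ≤ g y - g xbar)
    (y : Euc d) (hy : y ∈ S ∩ ball xbar (min δ (9*γ/(16*ρ)))) :
    g y + ⟪ gradient g y, xbar - y ⟫_ℝ ≤ g xbar ∧ γ/2 * ‖y - xbar‖ ≤ ‖gradient g y‖ := by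
  obtain ⟨hyS, hyb⟩ := hy
  have hyδ : y ∈ ball xbar δ := ball_subset_ball (min_le_left _ _) hyb
  have hx : xbar ∈ ball xbar δ := mem_ball_self (pos_of_mem_ball hyδ)
  set u := y - xbar
  set H := fderiv ℝ (gradient g) xbar
  have hsmall : 10 * (ρ / 2) * ‖u‖ ≤ 3 * γ := by
    have : ‖u‖ < 9 * γ / (16 * ρ) := (mem_ball_iff_norm.1 hyb).trans_le (min_le_right _ _)
    rw [lt_div_iff₀ (by positivity)] at this
    linarith [mul_nonneg hρ.le (norm_nonneg u)]
  have hgrad : ∀ z ∈ ball xbar δ, HasGradientAt g (gradient g z) z := fun z hz =>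
    ((hg.differentiableOn (by norm_num)).differentiableAt (isOpen_ball.mem_nhds hz)).hasGradientAt
  have hHessAt : ∀ z ∈ ball xbar δ, HasFDerivAt (gradient g) (fderiv ℝ (gradient g) z) z :=
    fun z hz => ((hg.differentiableOn_gradient isOpen_ball).differentiableAt
      (isOpen_ball.mem_nhds hz)).hasFDerivAt
  have taylor_grad : ∀ z ∈ ball xbar δ,
      ‖gradient g z - gradient g xbar - H (z - xbar)‖ ≤ ρ / 2 * ‖z - xbar‖ ^ 2 := fun z hz =>
    (convex_ball _ _).norm_image_sub_sub_fderiv_le hHessAt hHess hx hz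
  have taylor := (convex_ball _ _).abs_image_sub_sub_inner_gradient_le hgrad taylor_grad hx hyδ
  rw [hgrad0, inner_zero_left, sub_zero] at taylor
  have hA : |⟪gradient g y, u⟫_ℝ - ⟪H u, u⟫_ℝ| ≤ ρ / 2 * ‖u‖ ^ 3 := by
    rw [← inner_sub_left, pow_succ, ← mul_assoc]
    refine (abs_real_inner_le_norm _ _).trans (mul_le_mul_of_nonneg_right ?_ (norm_nonneg u))
    simpa only [hgrad0, sub_zero] using taylor_grad y hyδ
  have hgrowth := hquad y ⟨hyS, hyδ⟩
  have hdescent : g y - g xbar ≤ ⟪gradient g y, u⟫_ℝ :=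
    le_of_abs_sub_le_of_quadratic_growth hsmall hgrowth taylor hA
  refine ⟨?_, ?_⟩
  · rw [← neg_sub y xbar, inner_neg_right]
    linarith
  · rcases (norm_nonneg u).eq_or_lt with hu | hu
    · simp [← hu]
    · refine le_of_mul_le_mul_right ?_ hu
      calc γ / 2 * ‖u‖ * ‖u‖ = γ / 2 * ‖u‖ ^ 2 := by ring
        _ ≤ ⟪gradient g y, u⟫_ℝ := hgrowth.trans hdescent
        _ ≤ ‖gradient g y‖ * ‖u‖ := real_inner_le_norm _ _

theorem stmt14 {d : ℕ} (g : Euc d → ℝ) (xbar : Euc d) (δ ρ γ : ℝ)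
    (hδ : 0 < δ) (hρ : 0 < ρ) (hγ : 0 < γ)
    (hg : ContDiffOn ℝ 2 g (ball xbar δ))
    (hgrad0 : gradient g xbar = 0)
    (hHess : ∀ a ∈ ball xbar δ, ∀ b ∈ ball xbar δ,
      ‖fderiv ℝ (gradient g) a - fderiv ℝ (gradient g) b‖ ≤ ρ * ‖a - b‖)
    (S : Set (Euc d)) (hxbarS : xbar ∈ S)
    (hquad : ∀ y ∈ S ∩ ball xbar δ, γ/2 * ‖y - xbar‖^2 ≤ g y - g xbar)
    (y : Euc d) (hy : y ∈ S ∩ ball xbar (min δ (9*γ/(16*ρ)))) :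
    g y + ⟪ gradient g y, xbar - y ⟫_ℝ ≤ g xbar ∧ γ/2 * ‖y - xbar‖ ≤ ‖gradient g y‖ :=
  stmt14_general g xbar δ ρ γ hρ hg hgrad0 hHess S hquad y hy
end

section
/- Let P : ℝ^d → ℝ^d, x̄ ∈ ℝ^d, δ > 0, C ≥ 0. Suppose P is differentiable on ball(x̄, 2δ) and its derivative x ↦ DP(x) is C-Lipschitz with respect to the operator norm on ball(x̄, 2δ). Fix x ∈ ball(x̄, δ) and x' ∈ ball(x̄, 2δ), and suppose: P x ∈ ball(x̄, 2δ), P(P x) = P x, and the linear map Q := DP(P x) satisfies Q(x − P x) = 0. Then ‖P x' − P x − Q(x' − x)‖ ≤ (C/2)·‖x' − P x‖² ≤ C·(‖x − P x‖² + ‖x − x'‖²). -/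
open Metric Set Filter
open scoped InnerProductSpace

/-!
Along the segment from `P x` to `x'`, the derivative of `P` drifts from `Q = DP(P x)` at rate
at most `C`, so integrating the drift gives the first-order Taylor remainder bound
`C/2 · ‖x' - P x‖²` at `P x`. Since `P (P x) = P x` and `Q` kills `x - P x`, that remainder is
exactly `P x' - P x - Q (x' - x)`.
-/

section TaylorRemainder

variable {E F : Type*} [NormedAddCommGroup E] [NormedSpace ℝ E]
  [NormedAddCommGroup F] [NormedSpace ℝ F]

theorem norm_sub_sub_fderiv_le_of_norm_fderiv_sub_le {f : E → F} {a b : E} {C : ℝ}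
    (hf : ∀ y ∈ segment ℝ a b, DifferentiableAt ℝ f y)
    (hLip : ∀ y ∈ segment ℝ a b, ‖fderiv ℝ f y - fderiv ℝ f a‖ ≤ C * ‖y - a‖) :
    ‖f b - f a - fderiv ℝ f a (b - a)‖ ≤ C / 2 * ‖b - a‖ ^ 2 := by
  set v := b - a
  set L := fderiv ℝ f a
  set γ : ℝ → E := fun t => a + t • v
  have hγ : ∀ t ∈ Icc (0 : ℝ) 1, γ t ∈ segment ℝ a b := fun t ht => by
    rw [segment_eq_image']; exact ⟨t, ht, rfl⟩
  set g : ℝ → F := fun t => f (γ t) - t • L v - f a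
  have hg : ∀ t ∈ Icc (0 : ℝ) 1, HasDerivAt g (fderiv ℝ f (γ t) v - L v) t := fun t ht => by
    have hγ' : HasDerivAt γ v t := by
      have h := ((hasDerivAt_id t).smul_const v).const_add a
      rwa [one_smul] at h
    have h := (((hf _ (hγ t ht)).hasFDerivAt.comp_hasDerivAt t hγ').sub
      ((hasDerivAt_id t).smul_const (L v))).sub_const (f a)
    rwa [one_smul] at h
  have hB : ∀ t : ℝ, HasDerivAt (fun t => C / 2 * ‖v‖ ^ 2 * t ^ 2) (C * ‖v‖ ^ 2 * t) t :=
    fun t => ((hasDerivAt_pow 2 t).const_mul (C / 2 * ‖v‖ ^ 2)).congr_deriv (by push_cast; ring)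
  have hg'_le : ∀ t ∈ Ico (0 : ℝ) 1, ‖fderiv ℝ f (γ t) v - L v‖ ≤ C * ‖v‖ ^ 2 * t := by
    intro t ht
    have hdist : ‖γ t - a‖ = t * ‖v‖ := by simp [γ, norm_smul, abs_of_nonneg ht.1]
    calc ‖fderiv ℝ f (γ t) v - L v‖ = ‖(fderiv ℝ f (γ t) - L) v‖ := rfl
      _ ≤ ‖fderiv ℝ f (γ t) - L‖ * ‖v‖ := ContinuousLinearMap.le_opNorm _ _
      _ ≤ C * ‖γ t - a‖ * ‖v‖ := by
        gcongr; exact hLip _ (hγ t (Ico_subset_Icc_self ht))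
      _ = C * ‖v‖ ^ 2 * t := by rw [hdist]; ring
  have hg1 : ‖g 1‖ ≤ C / 2 * ‖v‖ ^ 2 * 1 ^ 2 :=
    image_norm_le_of_norm_deriv_right_le_deriv_boundary
      (fun t ht => (hg t ht).continuousAt.continuousWithinAt)
      (fun t ht => (hg t (Ico_subset_Icc_self ht)).hasDerivWithinAt)
      (by simp [g, γ]) hB hg'_le (right_mem_Icc.2 zero_le_one)
  have hg1_eq : g 1 = f b - f a - L v := by
    simp only [g, γ, v, one_smul, add_sub_cancel, sub_right_comm]
  simpa [hg1_eq] using hg1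

end TaylorRemainder

theorem sq_norm_sub_le_two_mul {E : Type*} [SeminormedAddCommGroup E] (u w : E) :
    ‖u - w‖ ^ 2 ≤ 2 * (‖u‖ ^ 2 + ‖w‖ ^ 2) :=
  (pow_le_pow_left₀ (norm_nonneg _) (norm_sub_le u w) 2).trans add_sq_le

theorem stmt16_general {d : ℕ} (P : Euc d → Euc d) (xbar : Euc d) (δ C : ℝ)
    (hC : 0 ≤ C)
    (hdiff : ∀ y ∈ ball xbar (2*δ), DifferentiableAt ℝ P y)
    (hLip : ∀ a ∈ ball xbar (2*δ), ∀ b ∈ ball xbar (2*δ),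
      ‖fderiv ℝ P a - fderiv ℝ P b‖ ≤ C * ‖a - b‖)
    (x x' : Euc d) (hx' : x' ∈ ball xbar (2*δ))
    (hPx : P x ∈ ball xbar (2*δ)) (hPP : P (P x) = P x)
    (hQ : fderiv ℝ P (P x) (x - P x) = 0) :
    ‖P x' - P x - fderiv ℝ P (P x) (x' - x)‖ ≤ C/2 * ‖x' - P x‖^2 ∧
    C/2 * ‖x' - P x‖^2 ≤ C * (‖x - P x‖^2 + ‖x - x'‖^2) := by
  have hseg : segment ℝ (P x) x' ⊆ ball xbar (2 * δ) :=
    (convex_ball _ _).segment_subset hPx hx'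
  have hTaylor := norm_sub_sub_fderiv_le_of_norm_fderiv_sub_le (f := P)
    (fun y hy => hdiff y (hseg hy)) (fun y hy => hLip y (hseg hy) _ hPx)
  have hQx : fderiv ℝ P (P x) (x' - x) = fderiv ℝ P (P x) (x' - P x) := by
    rw [show x' - x = (x' - P x) - (x - P x) by abel, map_sub, hQ, sub_zero]
  refine ⟨by rwa [hPP, ← hQx] at hTaylor, ?_⟩
  have hsplit : ‖x' - P x‖ ^ 2 ≤ 2 * (‖x - P x‖ ^ 2 + ‖x - x'‖ ^ 2) := by
    simpa [sub_sub_sub_cancel_left] using sq_norm_sub_le_two_mul (x - P x) (x - x')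
  linarith [mul_le_mul_of_nonneg_left hsplit hC]

theorem stmt16 {d : ℕ} (P : Euc d → Euc d) (xbar : Euc d) (δ C : ℝ)
    (hδ : 0 < δ) (hC : 0 ≤ C)
    (hdiff : ∀ y ∈ ball xbar (2*δ), DifferentiableAt ℝ P y)
    (hLip : ∀ a ∈ ball xbar (2*δ), ∀ b ∈ ball xbar (2*δ),
      ‖fderiv ℝ P a - fderiv ℝ P b‖ ≤ C * ‖a - b‖)
    (x x' : Euc d) (hx : x ∈ ball xbar δ) (hx' : x' ∈ ball xbar (2*δ))
    (hPx : P x ∈ ball xbar (2*δ)) (hPP : P (P x) = P x)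
    (hQ : fderiv ℝ P (P x) (x - P x) = 0) :
    ‖P x' - P x - fderiv ℝ P (P x) (x' - x)‖ ≤ C/2 * ‖x' - P x‖^2 ∧
    C/2 * ‖x' - P x‖^2 ≤ C * (‖x - P x‖^2 + ‖x - x'‖^2) :=
  stmt16_general P xbar δ C hC hdiff hLip x x' hx' hPx hPP hQ
end
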